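/- arXiv:2503.20473 — 9 statements merged into one kernel-verified Lean document; each statement's English description precedes it below -/
import Mathlib

section
/- Fix α > 0 and integers n ≥ 2. Let B be the set of vectors P = (x₁,...,xₙ) ∈ ℝⁿ with Σxᵢ = 0 and Σ|xᵢ| = 2α. For each i ∈ {1,...,n-1}, let P_{i,α} be the vector whose first i coordinates equal α/i and remaining n-i coordinates equal -α/(n-i). Then for every P ∈ B there exists i ∈ {1,...,n-1} such that P_{i,α} ≺ P (P_{i,α} is majorized by P). -/
open Finset

/-- `x` is majorized by `y`. -/
def IsMajorizedBy {n : ℕ} (x y : Fin n → ℝ) : Prop :=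
  (∀ A : Finset (Fin n), ∃ B : Finset (Fin n),
      B.card = A.card ∧ ∑ i ∈ A, x i ≤ ∑ i ∈ B, y i)
    ∧ ∑ i, x i = ∑ i, y i

/-!
Let `S` be the set of positive coordinates of `P` and `i = #S`; since `∑ P = 0` and
`∑ |P| = 2α`, the coordinates of `P` sum to `α` on `S` and to `-α` off it. Among any `k`
coordinates, `P_{i,α}` can put at most `m = min k i` on its `α / i` block, so its `k`-sums are
at most `m α / i - (k - m) α / (n - i)`. This is matched by `P`: the `m` largest coordinates in
`S` together with the `k - m` largest ones off `S` sum to at least their averaged shares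
`m α / i` and `-(k - m) α / (n - i)`.
-/

section TopSubsets

variable {ι : Type*} [DecidableEq ι] (f : ι → ℝ)

theorem exists_subset_card_eq_mul_sum_div_card_le (S : Finset ι) {k : ℕ} (hk : k ≤ #S) :
    ∃ B ⊆ S, #B = k ∧ k * ((∑ j ∈ S, f j) / #S) ≤ ∑ j ∈ B, f j := by
  induction k with
  | zero => exact ⟨∅, empty_subset _, card_empty, by simp⟩
  | succ k ih =>
    obtain ⟨B, hBS, rfl, hB⟩ := ih (by omega)
    obtain ⟨a, ha, hmax⟩ := exists_max_image (S \ B) f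
      (by rw [← card_pos, card_sdiff_of_subset hBS]; omega)
    rw [mem_sdiff] at ha
    refine ⟨insert a B, insert_subset ha.1 hBS, card_insert_of_notMem ha.2, ?_⟩
    have hrest : ∑ j ∈ S, f j - ∑ j ∈ B, f j ≤ (#S - #B : ℕ) * f a := by
      rw [← sum_sdiff_eq_sub hBS, ← card_sdiff_of_subset hBS, ← nsmul_eq_mul]
      exact sum_le_card_nsmul _ _ _ hmax
    have hgap : (#B : ℝ) + 1 ≤ #S := by exact_mod_cast hk
    have hpos : (0 : ℝ) < #S := by linarith [(#B).cast_nonneg (α := ℝ)]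
    rw [Nat.cast_sub (by omega)] at hrest
    rw [mul_div_assoc', div_le_iff₀ hpos] at hB ⊢
    rw [sum_insert ha.2]
    push_cast
    -- `(#S - #B) * goal` is `#S * hrest + (#S - #B - 1) * hB`
    nlinarith [mul_le_mul_of_nonneg_left hrest hpos.le,
      mul_le_mul_of_nonneg_left hB (by linarith : (0 : ℝ) ≤ #S - #B - 1)]

theorem exists_card_eq_add_mul_sum_div_card_le {S T : Finset ι} (hST : Disjoint S T) {k l : ℕ}
    (hk : k ≤ #S) (hl : l ≤ #T) :
    ∃ B : Finset ι, #B = k + l ∧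
      k * ((∑ j ∈ S, f j) / #S) + l * ((∑ j ∈ T, f j) / #T) ≤ ∑ j ∈ B, f j := by
  obtain ⟨B, hBS, rfl, hB⟩ := exists_subset_card_eq_mul_sum_div_card_le f S hk
  obtain ⟨C, hCT, rfl, hC⟩ := exists_subset_card_eq_mul_sum_div_card_le f T hl
  have hBC : Disjoint B C := hST.mono hBS hCT
  exact ⟨B ∪ C, card_union_of_disjoint hBC, by rw [sum_union hBC]; exact add_le_add hB hC⟩

end TopSubsets

theorem sum_filter_pos_eq_half_sum_abs {ι : Type*} [Fintype ι] {f : ι → ℝ}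
    (hf : ∑ j, f j = 0) : ∑ j with 0 < f j, f j = (∑ j, |f j|) / 2 := by
  have habs : ∑ j, |f j| = ∑ j with 0 < f j, f j - ∑ j with ¬ 0 < f j, f j := by
    rw [← sum_filter_add_sum_filter_not univ (0 < f ·), sub_eq_add_neg, ← sum_neg_distrib]
    congr 1 <;> refine sum_congr rfl fun j hj => ?_
    · exact abs_of_pos (mem_filter.mp hj).2
    · exact abs_of_nonpos (not_lt.mp (mem_filter.mp hj).2)
  rw [← sum_filter_add_sum_filter_not univ (0 < f ·)] at hf
  linarith

theorem sum_filter_not_pos_eq_neg_half_sum_abs {ι : Type*} [Fintype ι] {f : ι → ℝ}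
    (hf : ∑ j, f j = 0) : ∑ j with ¬ 0 < f j, f j = -(∑ j, |f j|) / 2 := by
  have := sum_filter_add_sum_filter_not univ (0 < f ·) f
  rw [hf, sum_filter_pos_eq_half_sum_abs hf] at this
  linarith

/-- The paper's `P_{i,α}`. -/
noncomputable def twoLevel (n i : ℕ) (α : ℝ) (j : Fin n) : ℝ :=
  if (j : ℕ) < i then α / i else -α / (n - i)

section TwoLevel

variable {n i : ℕ} {α : ℝ}

theorem sum_twoLevel (A : Finset (Fin n)) :
    ∑ j ∈ A, twoLevel n i α j =
      #{j ∈ A | j.val < i} * (α / i) + #{j ∈ A | ¬ j.val < i} * (-α / (n - i)) := by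
  simp only [twoLevel, sum_ite, sum_const, nsmul_eq_mul]

theorem sum_univ_twoLevel (hi : 0 < i) (hin : i < n) : ∑ j, twoLevel n i α j = 0 := by
  have hlow : #{j : Fin n | j.val < i} = i := by rw [Fin.card_filter_val_lt]; omega
  have hhigh : (#{j : Fin n | ¬ j.val < i} : ℝ) = n - i := by
    have := card_filter_add_card_filter_not (s := univ) (fun j : Fin n => j.val < i)
    rw [hlow, card_univ, Fintype.card_fin] at this
    rw [eq_sub_iff_add_eq']
    exact_mod_cast this
  have hi' : (i : ℝ) ≠ 0 := by positivity
  have hin' : (n : ℝ) - i ≠ 0 := sub_ne_zero.mpr (by exact_mod_cast hin.ne')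
  rw [sum_twoLevel, hlow, hhigh]
  field_simp
  ring

theorem sum_twoLevel_le (hin : i ≤ n) (hα : 0 ≤ α) (A : Finset (Fin n)) :
    ∑ j ∈ A, twoLevel n i α j ≤
      min #A i * (α / i) + (#A - min #A i : ℕ) * (-α / (n - i)) := by
  rw [sum_twoLevel]
  set a := #{j ∈ A | j.val < i}
  set b := #{j ∈ A | ¬ j.val < i}
  have hab : a + b = #A := card_filter_add_card_filter_not _
  have hai : a ≤ i := by
    calc a ≤ #{j : Fin n | j.val < i} := card_le_card (filter_subset_filter _ (subset_univ A))
      _ = i := by rw [Fin.card_filter_val_lt]; omega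
  obtain ⟨c, hc⟩ := Nat.exists_eq_add_of_le (le_min (hab ▸ le_self_add) hai)
  have hb : b = (#A - min #A i) + c := by omega
  have hqp : -α / (n - i) ≤ α / i := by
    have : (i : ℝ) ≤ n := by exact_mod_cast hin
    exact (div_nonpos_of_nonpos_of_nonneg (by linarith) (by linarith)).trans (by positivity)
  generalize #A - min #A i = l at hb ⊢
  rw [hc, hb]
  push_cast
  linarith [mul_le_mul_of_nonneg_left hqp c.cast_nonneg]

end TwoLevel

theorem exists_minimal_population_general
    {n : ℕ} (α : ℝ) (hα : 0 < α)
    (P : Fin n → ℝ) (hsum : ∑ j, P j = 0) (habs : ∑ j, |P j| = 2 * α) :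
    ∃ i ∈ Finset.Icc 1 (n - 1),
      IsMajorizedBy
        (fun j : Fin n => if (j : ℕ) < i then α / i else -α / (n - i)) P := by
  classical
  set S : Finset (Fin n) := {j | 0 < P j}
  set T : Finset (Fin n) := {j | ¬ 0 < P j}
  have hS : ∑ j ∈ S, P j = α := by rw [sum_filter_pos_eq_half_sum_abs hsum, habs]; ring
  have hT : ∑ j ∈ T, P j = -α := by
    rw [sum_filter_not_pos_eq_neg_half_sum_abs hsum, habs]; ring
  have hST : #S + #T = n := by rw [card_filter_add_card_filter_not, card_univ, Fintype.card_fin]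
  have hdisj : Disjoint S T := disjoint_filter_filter_not univ univ _
  have hS0 : 0 < #S := card_pos.mpr (nonempty_of_sum_ne_zero (hS ▸ hα.ne'))
  have hT0 : 0 < #T := card_pos.mpr (nonempty_of_sum_ne_zero (hT ▸ (neg_neg_of_pos hα).ne))
  have hTcard : (#T : ℝ) = n - #S := by rw [eq_sub_iff_add_eq']; exact_mod_cast hST
  refine ⟨#S, mem_Icc.mpr ⟨hS0, by omega⟩, fun A => ?_,
    (sum_univ_twoLevel hS0 (by omega)).trans hsum.symm⟩
  have hA : #A ≤ n := by simpa using card_le_univ A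
  have hl : #A - min #A #S ≤ #T := by omega
  obtain ⟨B, hB, hle⟩ := exists_card_eq_add_mul_sum_div_card_le P hdisj (min_le_right #A #S) hl
  rw [hS, hT, hTcard] at hle
  exact ⟨B, by omega, (sum_twoLevel_le (by omega) hα.le A).trans hle⟩

/-- Every zero-sum population with absolute deviation `2α` majorizes some two-valued
population `P_{i,α}`. -/
theorem exists_minimal_population
    {n : ℕ} (hn : 2 ≤ n) (α : ℝ) (hα : 0 < α)
    (P : Fin n → ℝ) (hsum : ∑ j, P j = 0) (habs : ∑ j, |P j| = 2 * α) :
    ∃ i ∈ Finset.Icc 1 (n - 1),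
      IsMajorizedBy
        (fun j : Fin n => if (j : ℕ) < i then α / i else -α / (n - i)) P :=
  exists_minimal_population_general α hα P hsum habs
end

section
/- For all positive integers n, √(2πn)·(n/e)ⁿ·e^{1/(12n+1)} < n! < √(2πn)·(n/e)ⁿ·e^{1/(12n)}. -/
/-!
For the Stirling sequence `s n = n! / (√(2n) (n/e)^n)`, which tends to `√π`, the step
`log s n - log s (n+1)` expands as `∑_{k ≥ 1} r^k / (2k+1)` with `r = (2n+1)⁻²`. Bounding
every `1/(2k+1)` by `1/3`, strictly from `k = 2` on, sums to `1/(12n) - 1/(12(n+1))`, while the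
leading term `r/3` alone exceeds `1/(12n+1) - 1/(12(n+1)+1)`. Hence `log s n - 1/(12n)`
increases and `log s n - 1/(12n+1)` decreases strictly, and both tend to `log √π`.
-/

open Real Filter Topology

theorem StrictMono.gt_of_tendsto {α β : Type*} [TopologicalSpace α] [Preorder α]
    [OrderClosedTopology α] [PartialOrder β] [IsDirectedOrder β] [NoMaxOrder β] {f : β → α}
    {a : α} (hf : StrictMono f) (ha : Tendsto f atTop (𝓝 a)) (b : β) : f b < a := by
  obtain ⟨c, hbc⟩ := exists_gt b
  exact (hf hbc).trans_le (hf.monotone.ge_of_tendsto ha c)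

theorem StrictAnti.lt_of_tendsto {α β : Type*} [TopologicalSpace α] [Preorder α]
    [OrderClosedTopology α] [PartialOrder β] [IsDirectedOrder β] [NoMaxOrder β] {f : β → α}
    {a : α} (hf : StrictAnti f) (ha : Tendsto f atTop (𝓝 a)) (b : β) : a < f b :=
  StrictMono.gt_of_tendsto (α := αᵒᵈ) hf ha b

namespace Stirling

theorem log_stirlingSeq_succ_sub_lt (n : ℕ) :
    log (stirlingSeq (n + 1)) - log (stirlingSeq (n + 2)) <
      1 / (12 * (n + 1)) - 1 / (12 * (n + 2)) := by
  set r : ℝ := (1 / (2 * (n + 1 : ℕ) + 1)) ^ 2 with hr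
  have hr0 : 0 < r := by positivity
  have hr1 : r < 1 := by grw [hr, ← n.zero_le]; norm_num
  have hgeom :
      HasSum (fun j : ℕ ↦ r ^ (j + 1) / 3) (1 / (12 * (n + 1)) - 1 / (12 * (n + 2))) := by
    have hsum : 1 / (12 * (n + 1)) - 1 / (12 * (n + 2)) = r * (1 - r)⁻¹ / 3 := by
      rw [hr, div_pow, one_pow, one_sub_div (by positivity),
        show (2 * (n + 1 : ℕ) + 1 : ℝ) ^ 2 - 1 = 4 * (n + 1) * (n + 2) by push_cast; ring]
      field_simp; ring
    simpa only [hsum, pow_succ'] using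
      ((hasSum_geometric_of_lt_one hr0.le hr1).mul_left r).div_const 3
  refine hasSum_lt (i := 1) (fun j ↦ ?_) ?_ (log_stirlingSeq_sdiff_hasSum n) hgeom
  · rw [← hr, one_div_mul_eq_div]
    gcongr
    push_cast
    linarith [(j.cast_nonneg : (0 : ℝ) ≤ j)]
  · rw [← hr, one_div_mul_eq_div]
    gcongr
    norm_num

theorem sub_lt_log_stirlingSeq_succ_sub (n : ℕ) :
    1 / (12 * (n + 1) + 1) - 1 / (12 * (n + 2) + 1) <
      log (stirlingSeq (n + 1)) - log (stirlingSeq (n + 2)) := by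
  refine lt_of_lt_of_le ?_ (le_hasSum (log_stirlingSeq_sdiff_hasSum n) 0 fun j _ ↦ by positivity)
  push_cast
  rw [div_sub_div _ _ (by positivity) (by positivity), div_pow, one_pow]
  field_simp
  nlinarith

theorem strictMono_log_stirlingSeq_sub :
    StrictMono fun n : ℕ ↦ log (stirlingSeq (n + 1)) - 1 / (12 * (n + 1)) :=
  strictMono_nat_of_lt_succ fun n ↦ by
    have := log_stirlingSeq_succ_sub_lt n
    push_cast
    ring_nf at this ⊢
    linarith

theorem strictAnti_log_stirlingSeq_sub :
    StrictAnti fun n : ℕ ↦ log (stirlingSeq (n + 1)) - 1 / (12 * (n + 1) + 1) :=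
  strictAnti_nat_of_succ_lt fun n ↦ by
    have := sub_lt_log_stirlingSeq_succ_sub n
    push_cast
    ring_nf at this ⊢
    linarith

theorem tendsto_log_stirlingSeq_succ :
    Tendsto (fun n : ℕ ↦ log (stirlingSeq (n + 1))) atTop (𝓝 (log √π)) :=
  ((continuousAt_log (by positivity)).tendsto.comp tendsto_stirlingSeq_sqrt_pi).comp
    (tendsto_add_atTop_nat 1)

theorem tendsto_twelve_mul_succ_atTop :
    Tendsto (fun n : ℕ ↦ 12 * ((n : ℝ) + 1)) atTop atTop :=
  (tendsto_atTop_add_const_right _ 1 tendsto_natCast_atTop_atTop).const_mul_atTop (by norm_num)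

theorem log_stirlingSeq_succ_lt (n : ℕ) :
    log (stirlingSeq (n + 1)) < log √π + 1 / (12 * (n + 1)) := by
  have hlim : Tendsto (fun n : ℕ ↦ log (stirlingSeq (n + 1)) - 1 / (12 * (n + 1))) atTop
      (𝓝 (log √π)) := by
    simpa only [sub_zero] using tendsto_log_stirlingSeq_succ.sub
      (tendsto_const_nhds.div_atTop tendsto_twelve_mul_succ_atTop)
  linarith [strictMono_log_stirlingSeq_sub.gt_of_tendsto hlim n]

theorem lt_log_stirlingSeq_succ (n : ℕ) :
    log √π + 1 / (12 * (n + 1) + 1) < log (stirlingSeq (n + 1)) := by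
  have hlim : Tendsto (fun n : ℕ ↦ log (stirlingSeq (n + 1)) - 1 / (12 * (n + 1) + 1)) atTop
      (𝓝 (log √π)) := by
    simpa only [sub_zero] using tendsto_log_stirlingSeq_succ.sub
      (tendsto_const_nhds.div_atTop
        (tendsto_atTop_add_const_right _ 1 tendsto_twelve_mul_succ_atTop))
  linarith [strictAnti_log_stirlingSeq_sub.lt_of_tendsto hlim n]

theorem sqrt_pi_mul_exp_lt_stirlingSeq_succ (n : ℕ) :
    √π * exp (1 / (12 * (n + 1) + 1)) < stirlingSeq (n + 1) := by
  have := exp_lt_exp.2 (lt_log_stirlingSeq_succ n)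
  rwa [exp_add, exp_log (sqrt_pos.2 pi_pos), exp_log (stirlingSeq'_pos n)] at this

theorem stirlingSeq_succ_lt_sqrt_pi_mul_exp (n : ℕ) :
    stirlingSeq (n + 1) < √π * exp (1 / (12 * (n + 1))) := by
  have := exp_lt_exp.2 (log_stirlingSeq_succ_lt n)
  rwa [exp_add, exp_log (sqrt_pos.2 pi_pos), exp_log (stirlingSeq'_pos n)] at this

end Stirling

/-- Robbins' sharpening of Stirling's formula. -/
theorem robbins_stirling (n : ℕ) (hn : 0 < n) :
    Real.sqrt (2 * Real.pi * n) * ((n : ℝ) / Real.exp 1) ^ n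
        * Real.exp (1 / (12 * (n : ℝ) + 1)) < (n.factorial : ℝ)
    ∧ (n.factorial : ℝ) < Real.sqrt (2 * Real.pi * n) * ((n : ℝ) / Real.exp 1) ^ n
        * Real.exp (1 / (12 * (n : ℝ))) := by
  obtain ⟨m, rfl⟩ := Nat.exists_eq_add_one_of_ne_zero hn.ne'
  set scale := √(2 * (m + 1 : ℕ)) * (((m + 1 : ℕ) : ℝ) / exp 1) ^ (m + 1)
  have hscale : 0 < scale := by positivity
  have hsplit :
      √(2 * π * (m + 1 : ℕ)) * (((m + 1 : ℕ) : ℝ) / exp 1) ^ (m + 1) = scale * √π := by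
    rw [mul_comm 2 π, mul_assoc, sqrt_mul pi_pos.le]
    ring
  have hfac : ((m + 1).factorial : ℝ) = scale * Stirling.stirlingSeq (m + 1) :=
    (mul_div_cancel₀ _ hscale.ne').symm
  rw [hsplit, hfac, mul_assoc scale, mul_assoc scale, mul_lt_mul_iff_right₀ hscale,
    mul_lt_mul_iff_right₀ hscale]
  push_cast
  exact ⟨Stirling.sqrt_pi_mul_exp_lt_stirlingSeq_succ m,
    Stirling.stirlingSeq_succ_lt_sqrt_pi_mul_exp m⟩
end

section
/- Let H ~ Hyp(n,i,k) with mean μ = ik/n, where μ ∈ [m-1,m] for some m ∈ {2,...,min{i,k}-1}. Then E|H - ik/n| = (2m/n)·(n-i-k+m)·P(H = m). -/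
/-- The hypergeometric probability `P(H = m)` for `H ~ Hyp(n,i,k)`. -/
noncomputable def hypPMF (n i k m : ℕ) : ℝ :=
  (Nat.choose i m * Nat.choose (n - i) (k - m)) / (Nat.choose n k)

/-- The mean absolute deviation `E|H - ik/n|` of `H ~ Hyp(n,i,k)`. -/
noncomputable def hypMAD (n i k : ℕ) : ℝ :=
  ∑ m ∈ Finset.range (k + 1), |(m : ℝ) - (i : ℝ) * k / n| * hypPMF n i k m

/-! The consecutive-ratio identity `(j+1)(n-i-k+j+1)·P(H = j+1) = (i-j)(k-j)·P(H = j)` makes the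
centred weights telescope: `(j - ik/n)·P(H = j) = g j - g (j+1)` with the potential
`g j = j(n-i-k+j)/n · P(H = j)` for `j ≤ k` and `g (k+1) = 0`. Summing from `0` gives
`∑_{j<m} (j - ik/n)·P(H = j) = -g m` and a vanishing total, and since `H - ik/n` changes sign at
`m`, `E|H - ik/n| = -2 ∑_{j<m} (j - ik/n)·P(H = j) = 2 g m`. -/

open Finset

theorem Nat.cast_choose_succ_mul {R : Type*} [CommRing R] (a t : ℕ) :
    ((t : R) + 1) * a.choose (t + 1) = ((a : R) - t) * a.choose t := by
  rcases le_or_gt t a with hta | hat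
  · have h := congrArg (Nat.cast : ℕ → R) (Nat.choose_succ_right_eq a t)
    push_cast [Nat.cast_sub hta] at h
    linear_combination h
  · simp [Nat.choose_eq_zero_of_lt hat, Nat.choose_eq_zero_of_lt (hat.trans (Nat.lt_succ_self t))]

theorem hypPMF_succ_mul {n i k j : ℕ} (hin : i ≤ n) (hjk : j < k) :
    ((j : ℝ) + 1) * ((n : ℝ) - i - k + (j + 1)) * hypPMF n i k (j + 1)
      = ((i : ℝ) - j) * ((k : ℝ) - j) * hypPMF n i k j := by
  obtain ⟨t, rfl⟩ := Nat.exists_eq_add_of_lt hjk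
  have hsub₁ : j + t + 1 - (j + 1) = t := by omega
  have hsub₂ : j + t + 1 - j = t + 1 := by omega
  have hci := Nat.cast_choose_succ_mul (R := ℝ) i j
  have hca := Nat.cast_choose_succ_mul (R := ℝ) (n - i) t
  simp only [hypPMF, hsub₁, hsub₂, ← mul_div_assoc]
  push_cast [Nat.cast_sub hin] at hca ⊢
  congr 1
  linear_combination ((n : ℝ) - i - t) * (n - i).choose t * hci - ((i : ℝ) - j) * i.choose j * hca

/-- The cut-off at `k` matters: as `k - j` truncates, `hypPMF n i k j` is not zero for `j > k`. -/
noncomputable def hypPotential (n i k j : ℕ) : ℝ :=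
  if j ≤ k then j * ((n : ℝ) - i - k + j) / n * hypPMF n i k j else 0

theorem sub_mul_hypPMF_eq_hypPotential_sub {n i k j : ℕ} (hin : i ≤ n) (hn : n ≠ 0)
    (hjk : j ≤ k) :
    ((j : ℝ) - i * k / n) * hypPMF n i k j =
      hypPotential n i k j - hypPotential n i k (j + 1) := by
  have hn' : (n : ℝ) ≠ 0 := by exact_mod_cast hn
  rcases hjk.lt_or_eq with hjk | rfl
  · have h := hypPMF_succ_mul hin hjk
    simp only [hypPotential, if_pos hjk.le, if_pos (Nat.succ_le_of_lt hjk)]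
    push_cast
    field_simp
    linear_combination h
  · simp only [hypPotential, le_refl, if_true, if_neg (Nat.not_succ_le_self j)]
    field_simp
    ring

theorem sum_range_sub_mul_hypPMF {n i k m : ℕ} (hin : i ≤ n) (hn : n ≠ 0) (hm : m ≤ k + 1) :
    ∑ j ∈ range m, ((j : ℝ) - i * k / n) * hypPMF n i k j = -hypPotential n i k m := by
  induction m with
  | zero => simp [hypPotential]
  | succ m ih =>
    rw [sum_range_succ, ih (by omega), sub_mul_hypPMF_eq_hypPotential_sub hin hn (by omega)]
    ring

theorem sum_abs_mul_eq_of_sign_change {f w : ℕ → ℝ} {m N : ℕ} (hmN : m ≤ N)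
    (hneg : ∀ j < m, f j ≤ 0) (hpos : ∀ j, m ≤ j → 0 ≤ f j) :
    ∑ j ∈ range N, |f j| * w j = ∑ j ∈ range N, f j * w j - 2 * ∑ j ∈ range m, f j * w j := by
  rw [← sum_range_add_sum_Ico _ hmN, ← sum_range_add_sum_Ico _ hmN]
  have hlow : ∑ j ∈ range m, |f j| * w j = -∑ j ∈ range m, f j * w j := by
    rw [← sum_neg_distrib]
    refine sum_congr rfl fun j hj => ?_
    rw [abs_of_nonpos (hneg j (mem_range.mp hj)), neg_mul]
  have hup : ∑ j ∈ Ico m N, |f j| * w j = ∑ j ∈ Ico m N, f j * w j :=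
    sum_congr rfl fun j hj => by rw [abs_of_nonneg (hpos j (mem_Ico.mp hj).1)]
  rw [hlow, hup]
  ring

theorem hyp_mad_closed_form_general
    (n i k m : ℕ)
    (hi : i ∈ Finset.Icc 1 (n - 1))
    (hm : m ∈ Finset.Icc 2 (min i k - 1))
    (hmean₁ : (m : ℝ) - 1 ≤ (i : ℝ) * k / n) (hmean₂ : (i : ℝ) * k / n ≤ m) :
    hypMAD n i k = (2 * m / n) * ((n : ℝ) - i - k + m) * hypPMF n i k m := by
  obtain ⟨hi₁, hin₁⟩ := mem_Icc.mp hi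
  obtain ⟨-, hmik⟩ := mem_Icc.mp hm
  have hn : n ≠ 0 := by omega
  have hin : i ≤ n := by omega
  have hmk : m ≤ k := by omega
  have hneg : ∀ j < m, (j : ℝ) - i * k / n ≤ 0 := fun j hj => by
    have : (j : ℝ) + 1 ≤ m := by exact_mod_cast hj
    linarith
  have hpos : ∀ j, m ≤ j → 0 ≤ (j : ℝ) - i * k / n := fun j hj => by
    have : (m : ℝ) ≤ j := by exact_mod_cast hj
    linarith
  rw [hypMAD, sum_abs_mul_eq_of_sign_change (by omega) hneg hpos,
    sum_range_sub_mul_hypPMF hin hn le_rfl, sum_range_sub_mul_hypPMF hin hn (by omega),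
    hypPotential, hypPotential, if_neg (Nat.not_succ_le_self k), if_pos hmk]
  ring

/-- Ramasubban's closed form for the mean absolute deviation of a hypergeometric
random variable: `E|H - ik/n| = (2m/n)·(n-i-k+m)·P(H = m)`. -/
theorem hyp_mad_closed_form
    (n i k m : ℕ) (hn : 2 ≤ n)
    (hi : i ∈ Finset.Icc 1 (n - 1)) (hk : k ∈ Finset.Icc 1 (n - 1))
    (hm : m ∈ Finset.Icc 2 (min i k - 1))
    (hmean₁ : (m : ℝ) - 1 ≤ (i : ℝ) * k / n) (hmean₂ : (i : ℝ) * k / n ≤ m) :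
    hypMAD n i k = (2 * m / n) * ((n : ℝ) - i - k + m) * hypPMF n i k m :=
  hyp_mad_closed_form_general n i k m hi hm hmean₁ hmean₂
end

section
/- Let H ~ Hyp(n,i,k) with mean ik/n = 1 and i > 1. Then (n/(2i(n-i)))·E|H - ik/n| = (k/(i(k-1)))·P(H = 0), and moreover this quantity equals ((ik-i-k+1)/(i²(k-1)))·P(H = 1). -/
open Finset

theorem Nat.sum_range_choose_mul_choose (a b k : ℕ) :
    ∑ m ∈ range (k + 1), a.choose m * b.choose (k - m) = (a + b).choose k := by
  rw [Nat.add_choose_eq, Nat.sum_antidiagonal_eq_sum_range_succ_mk]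

theorem Nat.sum_range_mul_choose_mul_choose (a b k : ℕ) :
    ∑ m ∈ range (k + 2), m * ((a + 1).choose m * b.choose (k + 1 - m))
      = (a + 1) * (a + b).choose k := by
  have hterm (m : ℕ) : (m + 1) * ((a + 1).choose (m + 1) * b.choose (k + 1 - (m + 1)))
      = (a + 1) * (a.choose m * b.choose (k - m)) := by
    rw [Nat.add_sub_add_right, ← mul_assoc, mul_comm (m + 1), ← Nat.add_one_mul_choose_eq]
    ring
  rw [sum_range_succ', sum_congr rfl fun m _ => hterm m, ← mul_sum,
    Nat.sum_range_choose_mul_choose]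
  simp

theorem sum_hypPMF_eq_one {n i k : ℕ} (hi : i ≤ n) (hk : k ≤ n) :
    ∑ m ∈ range (k + 1), hypPMF n i k m = 1 := by
  have hC : (n.choose k : ℝ) ≠ 0 := by exact_mod_cast (Nat.choose_pos hk).ne'
  simp_rw [hypPMF, ← sum_div, div_eq_one_iff_eq hC]
  exact_mod_cast (Nat.add_sub_cancel' hi) ▸ Nat.sum_range_choose_mul_choose i (n - i) k

theorem sum_mul_hypPMF {n i k : ℕ} (hi : i ≤ n) (hk : k ≤ n) :
    ∑ m ∈ range (k + 1), (m : ℝ) * hypPMF n i k m = i * k / n := by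
  rcases i with _ | a
  · exact (sum_eq_zero fun m _ => by cases m <;> simp [hypPMF]).trans (by simp)
  rcases k with _ | K
  · simp
  have hC : (n.choose (K + 1) : ℝ) ≠ 0 := by exact_mod_cast (Nat.choose_pos hk).ne'
  have hpascal := Nat.add_one_mul_choose_eq (n - 1) K
  rw [Nat.sub_add_cancel (by omega)] at hpascal
  have hsum := Nat.sum_range_mul_choose_mul_choose a (n - (a + 1)) K
  rw [show a + (n - (a + 1)) = n - 1 by omega] at hsum
  simp_rw [hypPMF, mul_div_assoc', ← sum_div]
  rw [div_eq_div_iff hC (by exact_mod_cast (by omega : n ≠ 0))]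
  have hsumR := congrArg (Nat.cast : ℕ → ℝ) hsum
  have hpascalR := congrArg (Nat.cast : ℕ → ℝ) hpascal
  push_cast at hsumR hpascalR ⊢
  rw [hsumR]
  linear_combination (a + 1 : ℝ) * hpascalR

theorem sum_abs_sub_one_mul_eq_two_mul {p : ℕ → ℝ} {K : ℕ} (h0 : ∑ m ∈ range (K + 1), p m = 1)
    (h1 : ∑ m ∈ range (K + 1), (m : ℝ) * p m = 1) :
    ∑ m ∈ range (K + 1), |(m : ℝ) - 1| * p m = 2 * p 0 := by
  rw [sum_range_succ'] at h0 h1 ⊢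
  simp only [Nat.cast_add, Nat.cast_one, add_sub_cancel_right, Nat.abs_cast, add_mul, one_mul,
    sum_add_distrib, Nat.cast_zero, zero_mul, add_zero, zero_sub, abs_neg, abs_one] at h1 ⊢
  linarith

theorem hypMAD_eq_two_mul_hypPMF_zero {n i k : ℕ} (hn : n = i * k) (hi : 0 < i) (hk : 0 < k) :
    hypMAD n i k = 2 * hypPMF n i k 0 := by
  have hin : i ≤ n := hn ▸ Nat.le_mul_of_pos_right i hk
  have hkn : k ≤ n := hn ▸ Nat.le_mul_of_pos_left k hi
  have hmean : (i : ℝ) * k / n = 1 := by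
    rw [hn, Nat.cast_mul, div_self (by positivity)]
  rw [hypMAD, hmean]
  exact sum_abs_sub_one_mul_eq_two_mul (sum_hypPMF_eq_one hin hkn)
    (hmean ▸ sum_mul_hypPMF hin hkn)

theorem mul_hypPMF_zero_eq (n i : ℕ) {k : ℕ} (hk : 0 < k) :
    (i * k : ℝ) * hypPMF n i k 0 = ((n - i + 1 - k : ℕ) : ℝ) * hypPMF n i k 1 := by
  obtain ⟨K, rfl⟩ := Nat.exists_eq_add_one_of_ne_zero hk.ne'
  have hR : ((n - i).choose (K + 1) : ℝ) * (K + 1)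
      = (n - i).choose K * ((n - i - K : ℕ) : ℝ) := by
    exact_mod_cast Nat.choose_succ_right_eq (n - i) K
  rw [Nat.add_sub_add_right]
  simp only [hypPMF, Nat.choose_zero_right, Nat.choose_one_right, Nat.sub_zero, Nat.add_sub_cancel]
  rw [mul_div_assoc', mul_div_assoc']
  congr 1
  push_cast
  linear_combination (i : ℝ) * hR

theorem hyp_mad_mean_one_general
    (n i k : ℕ) (hn : n = i * k) (hi1 : 1 < i)
    (hk1 : 1 < k) :
    (n : ℝ) / (2 * i * ((n : ℝ) - i)) * hypMAD n i k
        = (k : ℝ) / (i * ((k : ℝ) - 1)) * hypPMF n i k 0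
      ∧ (n : ℝ) / (2 * i * ((n : ℝ) - i)) * hypMAD n i k
        = ((i : ℝ) * k - i - k + 1) / ((i : ℝ) ^ 2 * ((k : ℝ) - 1)) * hypPMF n i k 1 := by
  have hmad := hypMAD_eq_two_mul_hypPMF_zero hn (by omega) (by omega)
  have hratio := mul_hypPMF_zero_eq n i (by omega : 0 < k)
  have hdeg : n - i + 1 - k = (i - 1) * (k - 1) := by
    obtain ⟨a, rfl⟩ : ∃ a, i = a + 2 := ⟨i - 2, by omega⟩
    obtain ⟨c, rfl⟩ : ∃ c, k = c + 2 := ⟨k - 2, by omega⟩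
    rw [hn, show (a + 2) * (c + 2) = a * c + 2 * a + 2 * c + 4 by ring,
      show (a + 2 - 1) * (c + 2 - 1) = a * c + a + c + 1 by simp; ring]
    omega
  have hnR : (n : ℝ) = i * k := by rw [hn, Nat.cast_mul]
  have hi : (i : ℝ) ≠ 0 := by positivity
  have hk : (k : ℝ) - 1 ≠ 0 := sub_ne_zero.2 (by exact_mod_cast hk1.ne')
  rw [hdeg, Nat.cast_mul, Nat.cast_sub hi1.le, Nat.cast_sub hk1.le] at hratio
  rw [hmad, hnR]
  constructor
  · field_simp
  · field_simp
    linear_combination hratio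

/-- When the hypergeometric mean equals `1` (i.e. `n = ik`) and `i, k > 1`, the scaled
mean absolute deviation has the two stated closed forms. -/
theorem hyp_mad_mean_one
    (n i k : ℕ) (hn : n = i * k) (hi1 : 1 < i) (hik : i ≤ n - 1)
    (hk1 : 1 < k) (hkk : k ≤ n - 1) :
    (n : ℝ) / (2 * i * ((n : ℝ) - i)) * hypMAD n i k
        = (k : ℝ) / (i * ((k : ℝ) - 1)) * hypPMF n i k 0
      ∧ (n : ℝ) / (2 * i * ((n : ℝ) - i)) * hypMAD n i k
        = ((i : ℝ) * k - i - k + 1) / ((i : ℝ) ^ 2 * ((k : ℝ) - 1)) * hypPMF n i k 1 :=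
  hyp_mad_mean_one_general n i k hn hi1 hk1
end

section
/- Let H ~ Hyp(n,i,k) for any n ≥ 2, i ∈ [n-1], k ∈ [n-1]. Then (n/(2i(n-i)))·E|H - ik/n| ≥ (e^{-1/3}/(8√(2π)))·√(k/n)·√(n-k)/n. -/
/-!
Write `X = H - ik/n`. By Hölder, `(E X²)³ ≤ (E|X|)² · E X⁴`, so it suffices to know the second
and fourth central moments of the hypergeometric law. Both follow from its factorial moments
`E[(H)ⱼ] = (i)ⱼ (k)ⱼ / (n)ⱼ` (a weighted Vandermonde identity): `E X² = i(n-i)k(n-k)/(n²(n-1))`,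
and for `n ≥ 4`, `E X⁴ ≤ 100 i(n-i) (k(n-k))² / (n(n-1)³)`. Together they give
`E|X| ≥ i(n-i) √(k(n-k)) / (10 n^{5/2})`, which is the claim with `1/20` in place of the
smaller constant `e^{-1/3}/(8√(2π))`. The cases `n = 2, 3` are checked directly.
-/

open Finset Real

theorem Nat.sum_range_choose_mul_choose_mul_choose {n i k j : ℕ} (hin : i ≤ n) (hjk : j ≤ k) :
    ∑ m ∈ range (k + 1), m.choose j * (i.choose m * (n - i).choose (k - m))
      = i.choose j * (n - j).choose (k - j) := by
  rcases lt_or_ge i j with hij | hji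
  · rw [Nat.choose_eq_zero_of_lt hij, zero_mul]
    refine sum_eq_zero fun m _ => ?_
    rcases lt_or_ge m j with hmj | hjm
    · simp [Nat.choose_eq_zero_of_lt hmj]
    · simp [Nat.choose_eq_zero_of_lt (hij.trans_le hjm)]
  rw [show k + 1 = j + (k - j + 1) by omega, sum_range_add,
    sum_eq_zero fun m (hm : m ∈ range j) => by rw [Nat.choose_eq_zero_of_lt (mem_range.1 hm),
      zero_mul], zero_add]
  calc ∑ t ∈ range (k - j + 1), (j + t).choose j * (i.choose (j + t) * (n - i).choose (k - (j + t)))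
      = ∑ t ∈ range (k - j + 1), i.choose j * ((i - j).choose t * (n - i).choose (k - j - t)) := by
        refine sum_congr rfl fun t _ => ?_
        rw [mul_left_comm, ← mul_assoc, Nat.choose_mul (Nat.le_add_right j t),
          Nat.add_sub_cancel_left, Nat.sub_add_eq, mul_assoc]
    _ = i.choose j * (n - j).choose (k - j) := by
        rw [← mul_sum, show n - j = i - j + (n - i) by omega, Nat.add_choose_eq,
          Finset.Nat.sum_antidiagonal_eq_sum_range_succ_mk]

theorem Nat.sum_range_descFactorial_mul_choose_mul_choose {n i k j : ℕ} (hin : i ≤ n)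
    (hjk : j ≤ k) :
    (∑ m ∈ range (k + 1), m.descFactorial j * (i.choose m * (n - i).choose (k - m)))
        * n.descFactorial j = i.descFactorial j * k.descFactorial j * n.choose k := by
  simp_rw [Nat.descFactorial_eq_factorial_mul_choose, mul_assoc, ← mul_sum,
    Nat.sum_range_choose_mul_choose_mul_choose hin hjk]
  rw [mul_comm (k.choose j), Nat.choose_mul hjk]
  ring

theorem Finset.sum_sq_mul_cube_le_sq_sum_abs_mul_mul_sum_pow_four {ι : Type*} (s : Finset ι)
    (w x : ι → ℝ) (hw : ∀ i ∈ s, 0 ≤ w i) :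
    (∑ i ∈ s, x i ^ 2 * w i) ^ 3 ≤ (∑ i ∈ s, |x i| * w i) ^ 2 * ∑ i ∈ s, x i ^ 4 * w i := by
  set S1 := ∑ i ∈ s, |x i| * w i
  set S2 := ∑ i ∈ s, x i ^ 2 * w i
  set S3 := ∑ i ∈ s, |x i| ^ 3 * w i
  set S4 := ∑ i ∈ s, x i ^ 4 * w i
  have h13 : S2 ^ 2 ≤ S1 * S3 := sum_sq_le_sum_mul_sum_of_sq_le_mul s
    (fun i hi => mul_nonneg (abs_nonneg _) (hw i hi))
    (fun i hi => mul_nonneg (by positivity) (hw i hi))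
    (fun i _ => le_of_eq (by rw [← sq_abs (x i)]; ring))
  have h24 : S3 ^ 2 ≤ S2 * S4 := sum_sq_le_sum_mul_sum_of_sq_le_mul s
    (fun i hi => mul_nonneg (sq_nonneg _) (hw i hi))
    (fun i hi => mul_nonneg (by positivity) (hw i hi))
    (fun i _ => le_of_eq (by rw [← sq_abs (x i), ← (by decide : Even 4).pow_abs (x i)]; ring))
  have hS2 : 0 ≤ S2 := sum_nonneg fun i hi => mul_nonneg (sq_nonneg _) (hw i hi)
  rcases hS2.eq_or_lt with hzero | hpos
  · rw [← hzero, zero_pow three_ne_zero]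
    exact mul_nonneg (sq_nonneg _) (sum_nonneg fun i hi => mul_nonneg (by positivity) (hw i hi))
  · refine le_of_mul_le_mul_left ?_ hpos
    calc S2 * S2 ^ 3 = (S2 ^ 2) ^ 2 := by ring
      _ ≤ (S1 * S3) ^ 2 := pow_le_pow_left₀ (sq_nonneg _) h13 2
      _ = S1 ^ 2 * S3 ^ 2 := by ring
      _ ≤ S1 ^ 2 * (S2 * S4) := mul_le_mul_of_nonneg_left h24 (sq_nonneg _)
      _ = S2 * (S1 ^ 2 * S4) := by ring

lemma sub_one_le_mul_sub {a b : ℝ} (ha : 1 ≤ a) (hab : a ≤ b - 1) : b - 1 ≤ a * (b - a) := by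
  nlinarith [mul_nonneg (sub_nonneg.2 ha) (sub_nonneg.2 hab)]

lemma exp_neg_one_third_div_le_one_twentieth :
    Real.exp (-1/3) / (8 * Real.sqrt (2 * Real.pi)) ≤ 1 / 20 := by
  have h1 : Real.exp (-1/3) ≤ 1 := exp_le_one_iff.2 (by norm_num)
  have h2 : 5 / 2 ≤ Real.sqrt (2 * Real.pi) :=
    (le_sqrt (by norm_num) (by positivity)).2 (by nlinarith [pi_gt_d2])
  rw [div_le_iff₀ (by positivity)]
  linarith

lemma hypPMF_nonneg (n i k m : ℕ) : 0 ≤ hypPMF n i k m := by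
  unfold hypPMF; positivity

noncomputable def hypExpect (n i k : ℕ) (f : ℝ → ℝ) : ℝ :=
  ∑ m ∈ range (k + 1), f m * hypPMF n i k m

lemma hypExpect_descPochhammer {n i k : ℕ} (hin : i ≤ n) (hkn : k ≤ n) (j : ℕ) :
    hypExpect n i k (fun x => (descPochhammer ℝ j).eval x) * (descPochhammer ℝ j).eval (n : ℝ)
      = (descPochhammer ℝ j).eval (i : ℝ) * (descPochhammer ℝ j).eval (k : ℝ) := by
  simp only [hypExpect, descPochhammer_eval_eq_descFactorial]
  rcases lt_or_ge k j with hkj | hjk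
  · rw [Nat.descFactorial_eq_zero_iff_lt.2 hkj, sum_eq_zero fun m hm => by
      rw [Nat.descFactorial_eq_zero_iff_lt.2 ((mem_range.1 hm).trans_le hkj)]; simp]
    simp
  have hC : (n.choose k : ℝ) ≠ 0 := by exact_mod_cast (Nat.choose_pos hkn).ne'
  have h := congrArg (fun x : ℕ => (x : ℝ))
    (Nat.sum_range_descFactorial_mul_choose_mul_choose hin hjk)
  simp only [hypPMF, Nat.cast_mul, Nat.cast_sum] at h ⊢
  rw [← div_left_inj' hC, mul_div_assoc, mul_div_cancel_right₀ _ hC] at h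
  rw [← h, sum_mul, sum_mul]
  exact sum_congr rfl fun m _ => by ring

lemma hypExpect_central_pow_two {n i k : ℕ} (hn : n ≠ 0) (hin : i ≤ n) (hkn : k ≤ n) :
    hypExpect n i k (fun x => (x - i * k / n) ^ 2) * (n ^ 2 * (n - 1))
      = i * (n - i) * (k * (n - k)) := by
  have F := hypExpect_descPochhammer hin hkn
  have F0 := F 0
  have F1 := F 1
  have F2 := F 2
  simp only [descPochhammer_succ_eval, descPochhammer_zero, Polynomial.eval_one, Nat.cast_zero,
    sub_zero, one_mul, Nat.cast_one] at F0 F1 F2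
  have hsplit : hypExpect n i k (fun x => (x - i * k / n) ^ 2)
      = hypExpect n i k (fun x => x * (x - 1))
        + (1 - 2 * (i * k / n)) * hypExpect n i k (fun x => x)
        + (i * k / n) ^ 2 * hypExpect n i k (fun _ => 1) := by
    simp only [hypExpect, mul_sum, ← sum_add_distrib]
    exact sum_congr rfl fun m _ => by ring
  have hn' : (n : ℝ) ≠ 0 := by exact_mod_cast hn
  rw [hsplit]
  field_simp
  linear_combination (n : ℝ) * F2 + ((n : ℝ) - 1) * (n - 2 * i * k) * F1
    + (i : ℝ) ^ 2 * k ^ 2 * (n - 1) * F0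

lemma hypExpect_central_pow_four {n i k : ℕ} (hn : n ≠ 0) (hin : i ≤ n) (hkn : k ≤ n) :
    let A : ℝ := i * (n - i)
    let B : ℝ := k * (n - k)
    hypExpect n i k (fun x => (x - i * k / n) ^ 4) * (n ^ 5 * (n - 1) ^ 2 * (n - 2) * (n - 3))
      = 3 * A ^ 2 * B ^ 2 * n * (n - 2) * (n - 3) + A * B * n ^ 3 * (n - 1) * (n - 2) * (n - 3)
        - 6 * A * B
          * (n ^ 3 * (n - 1) * (A + B) - n ^ 3 * (n - 1) ^ 2 - n * (5 * n - 6) * A * B) := by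
  intro A B
  have F := hypExpect_descPochhammer hin hkn
  have F0 := F 0
  have F1 := F 1
  have F2 := F 2
  have F3 := F 3
  have F4 := F 4
  simp only [descPochhammer_succ_eval, descPochhammer_zero, Polynomial.eval_one, Nat.cast_zero,
    sub_zero, one_mul, Nat.cast_one, Nat.cast_ofNat] at F0 F1 F2 F3 F4
  have hn' : (n : ℝ) ≠ 0 := by exact_mod_cast hn
  set ik : ℝ := i * k
  have hsplit : hypExpect n i k (fun x => (x - ik / n) ^ 4) * n ^ 4
      = n ^ 4 * hypExpect n i k (fun x => x * (x - 1) * (x - 2) * (x - 3))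
        + (6 * n ^ 4 - 4 * n ^ 3 * ik) * hypExpect n i k (fun x => x * (x - 1) * (x - 2))
        + (7 * n ^ 4 - 12 * n ^ 3 * ik + 6 * n ^ 2 * ik ^ 2)
          * hypExpect n i k (fun x => x * (x - 1))
        + (n ^ 4 - 4 * n ^ 3 * ik + 6 * n ^ 2 * ik ^ 2 - 4 * n * ik ^ 3)
          * hypExpect n i k (fun x => x)
        + ik ^ 4 * hypExpect n i k (fun _ => 1) := by
    simp only [hypExpect, sum_mul, mul_sum, ← sum_add_distrib]
    exact sum_congr rfl fun m _ => by field_simp; ring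
  linear_combination (n * (n - 1) ^ 2 * (n - 2) * (n - 3)) * hsplit
    + (n ^ 4 * (n - 1)) * F4
    + ((6 * n ^ 4 - 4 * n ^ 3 * ik) * (n - 1) * (n - 3)) * F3
    + ((7 * n ^ 4 - 12 * n ^ 3 * ik + 6 * n ^ 2 * ik ^ 2) * (n - 1) * (n - 2) * (n - 3)) * F2
    + ((n ^ 4 - 4 * n ^ 3 * ik + 6 * n ^ 2 * ik ^ 2 - 4 * n * ik ^ 3)
        * (n - 1) ^ 2 * (n - 2) * (n - 3)) * F1
    + (ik ^ 4 * n * (n - 1) ^ 2 * (n - 2) * (n - 3)) * F0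

lemma hypExpect_central_pow_four_le {n i k : ℕ} (hn : 4 ≤ n) (hi : 1 ≤ i) (hin : i < n)
    (hk : 1 ≤ k) (hkn : k < n) :
    hypExpect n i k (fun x => (x - i * k / n) ^ 4) * (n * (n - 1) ^ 3)
      ≤ 100 * (i * (n - i)) * (k * (n - k)) ^ 2 := by
  have hS := hypExpect_central_pow_four (by omega) hin.le hkn.le
  have hN : (4 : ℝ) ≤ n := by exact_mod_cast hn
  have hA1 : (n : ℝ) - 1 ≤ i * (n - i) := sub_one_le_mul_sub (by exact_mod_cast hi) (by
    rw [le_sub_iff_add_le]; exact_mod_cast hin)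
  have hA2 : 4 * (i * (n - i) : ℝ) ≤ n ^ 2 := by
    simpa [mul_assoc] using four_mul_le_sq_add (i : ℝ) (n - i)
  have hB1 : (n : ℝ) - 1 ≤ k * (n - k) := sub_one_le_mul_sub (by exact_mod_cast hk) (by
    rw [le_sub_iff_add_le]; exact_mod_cast hkn)
  set A : ℝ := i * (n - i)
  set B : ℝ := k * (n - k)
  set N : ℝ := (n : ℝ)
  have hA : 0 < A := by linarith
  have hB : 0 < B := by linarith
  have h1 : 0 < N - 1 := by linarith
  have h2 : 0 < N - 2 := by linarith
  have h3 : 0 < N - 3 := by linarith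
  have ha : 3 * A * (N - 1) * N ≤ 3 / 4 * N ^ 4 := by nlinarith
  have hb : (N - 1) ^ 2 ≤ N * B := by nlinarith
  have hc : 6 * (N - 1) * (5 * N - 6) * A ≤ 16 * N ^ 3 * (N - 2) * (N - 3) := by
    have h4 : 0 ≤ N - 4 := by linarith
    have hq : 3 / 2 * (N - 1) * (5 * N - 6) ≤ 16 * N * (N - 2) * (N - 3) := by
      nlinarith [pow_nonneg h4 2, pow_nonneg h4 3]
    nlinarith [mul_le_mul_of_nonneg_left hA2 (mul_nonneg h1.le (by linarith : (0:ℝ) ≤ 5 * N - 6)),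
      mul_le_mul_of_nonneg_left hq (sq_nonneg N)]
  have hG : 0 ≤ 6 * (N - 1) * A * B * (N ^ 3 * (N - 1) * (A + B - (N - 1))) := by
    have : 0 ≤ A + B - (N - 1) := by linarith
    positivity
  have hslack : 0 ≤ A * B ^ 2 * (N ^ 4 * (N - 2) * (N - 3)) := by positivity
  -- By `hG`, the bracket multiplying `-6AB` in `hS` is at least `-N(5N-6)AB`; then the three
  -- terms of `hS` are at most `3/4`, `1` and `16` times `AB²N⁴(N-2)(N-3)` by `ha`, `hb`, `hc`.
  refine le_of_mul_le_mul_right ?_ (by positivity : 0 < N ^ 4 * (N - 2) * (N - 3))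
  linear_combination (N - 1) * hS
    + mul_le_mul_of_nonneg_left ha (by positivity : 0 ≤ A * B ^ 2 * (N - 2) * (N - 3))
    + mul_le_mul_of_nonneg_left hb (by positivity : 0 ≤ A * B * N ^ 3 * (N - 2) * (N - 3))
    + mul_le_mul_of_nonneg_left hc (by positivity : 0 ≤ A * B ^ 2 * N)
    + hG + (329 / 4) * hslack

lemma sq_mul_le_hypMAD_sq {n i k : ℕ} (hi : 1 ≤ i) (hin : i < n) (hk : 1 ≤ k) (hkn : k < n) :
    (i * (n - i) : ℝ) ^ 2 * (k * (n - k)) ≤ 100 * n ^ 5 * hypMAD n i k ^ 2 := by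
  rcases lt_or_ge n 4 with hn | hn
  · interval_cases n <;> interval_cases i <;> interval_cases k <;>
      norm_num [hypMAD, hypPMF, sum_range_succ, Nat.choose]
  have hHolder : hypExpect n i k (fun x => (x - i * k / n) ^ 2) ^ 3
      ≤ hypMAD n i k ^ 2 * hypExpect n i k (fun x => (x - i * k / n) ^ 4) :=
    sum_sq_mul_cube_le_sq_sum_abs_mul_mul_sum_pow_four _ _ _ fun m _ => hypPMF_nonneg n i k m
  have h2 := hypExpect_central_pow_two (by omega) hin.le hkn.le
  have h4 := hypExpect_central_pow_four_le hn hi hin hk hkn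
  set S2 := hypExpect n i k (fun x => (x - i * k / n) ^ 2)
  set S4 := hypExpect n i k (fun x => (x - i * k / n) ^ 4)
  set M := hypMAD n i k
  set A : ℝ := i * (n - i)
  set B : ℝ := k * (n - k)
  have hA : 0 < A := mul_pos (by exact_mod_cast hi) (sub_pos.2 (by exact_mod_cast hin))
  have hB : 0 < B := mul_pos (by exact_mod_cast hk) (sub_pos.2 (by exact_mod_cast hkn))
  refine le_of_mul_le_mul_right ?_ (by positivity : 0 < A * B ^ 2)
  calc A ^ 2 * B * (A * B ^ 2) = (S2 * (n ^ 2 * (n - 1))) ^ 3 := by rw [h2]; ring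
    _ = S2 ^ 3 * (n ^ 2 * (n - 1)) ^ 3 := by ring
    _ ≤ M ^ 2 * S4 * (n ^ 2 * (n - 1)) ^ 3 := by
        have : (0 : ℝ) ≤ n - 1 := by
          rw [sub_nonneg]; exact_mod_cast (by omega : 1 ≤ n)
        gcongr
    _ = M ^ 2 * n ^ 5 * (S4 * (n * (n - 1) ^ 3)) := by ring
    _ ≤ M ^ 2 * n ^ 5 * (100 * A * B ^ 2) := by gcongr
    _ = 100 * n ^ 5 * M ^ 2 * (A * B ^ 2) := by ring

theorem hyp_mad_lower_bound_general
    (n i k : ℕ)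
    (hi : i ∈ Finset.Icc 1 (n - 1)) (hk : k ∈ Finset.Icc 1 (n - 1)) :
    Real.exp (-1/3) / (8 * Real.sqrt (2 * Real.pi))
        * Real.sqrt ((k : ℝ) / n) * Real.sqrt ((n : ℝ) - k) / n
      ≤ (n : ℝ) / (2 * i * ((n : ℝ) - i)) * hypMAD n i k := by
  obtain ⟨hi1, hin⟩ := Finset.mem_Icc.mp hi
  obtain ⟨hk1, hkn⟩ := Finset.mem_Icc.mp hk
  have hMAD := sq_mul_le_hypMAD_sq (n := n) hi1 (by omega) hk1 (by omega)
  have hi0 : (0 : ℝ) < i := by exact_mod_cast hi1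
  have hni : (0 : ℝ) < n - i := sub_pos.2 (by exact_mod_cast (by omega : i < n))
  have hnk : (0 : ℝ) < n - k := sub_pos.2 (by exact_mod_cast (by omega : k < n))
  have hn : (0 : ℝ) < n := by linarith
  have hM : 0 ≤ hypMAD n i k := sum_nonneg fun m _ => mul_nonneg (abs_nonneg _) (hypPMF_nonneg ..)
  calc Real.exp (-1/3) / (8 * Real.sqrt (2 * Real.pi))
        * Real.sqrt ((k : ℝ) / n) * Real.sqrt ((n : ℝ) - k) / n
      ≤ 1 / 20 * Real.sqrt ((k : ℝ) / n) * Real.sqrt ((n : ℝ) - k) / n := by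
        gcongr ?_ * _ * _ / _; exact exp_neg_one_third_div_le_one_twentieth
    _ ≤ (n : ℝ) / (2 * i * ((n : ℝ) - i)) * hypMAD n i k := by
        refine le_of_pow_le_pow_left₀ two_ne_zero (by positivity) ?_
        rw [div_pow, mul_pow, mul_pow, sq_sqrt (by positivity), sq_sqrt hnk.le]
        field_simp
        linear_combination 4 * hMAD

/-- General lower bound on the scaled mean absolute deviation of a hypergeometric
random variable, valid for all `n ≥ 2`, `i, k ∈ [n-1]`. -/
theorem hyp_mad_lower_bound
    (n i k : ℕ) (hn : 2 ≤ n)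
    (hi : i ∈ Finset.Icc 1 (n - 1)) (hk : k ∈ Finset.Icc 1 (n - 1)) :
    Real.exp (-1/3) / (8 * Real.sqrt (2 * Real.pi))
        * Real.sqrt ((k : ℝ) / n) * Real.sqrt ((n : ℝ) - k) / n
      ≤ (n : ℝ) / (2 * i * ((n : ℝ) - i)) * hypMAD n i k :=
  hyp_mad_lower_bound_general n i k hi hk
end

section
/- Let P = (x₁,...,xₙ), n ≥ 2, with Σxᵢ = 0 and Σ|xᵢ| > 0, and let k ∈ [n-1]. Let X_P = Σ_{i∈I} xᵢ where I is a uniformly random k-element subset of [n]. Then P(X_P > 0) ≥ (e^{-1/3}/(8√(2π)))·(k/n)·√((n-k)/(nk)). -/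
/-!
Pick `r = min k (n - k)` disjoint pairs `(aᵢ, bᵢ)` and a set `C` of `k - r` further points, so
that `K = {aᵢ} ∪ C` and `K' = {bᵢ} ∪ C` are two `k`-sets, and average over all permutations `π`
of the population. The variable `Z = Σᵢ (x (π aᵢ) - x (π bᵢ))` is the difference of the two
`k`-subset sums, so `E|Z| ≤ 2 E|X_P|`; and since `E X_P = 0` with `X_P ≤ Σ |xᵢ|`, we have
`E|X_P| ≤ 2 (Σ |xᵢ|) P(X_P > 0)`. On the other hand, composing `π` with transpositions of pairs
flips the signs of the summands of `Z` independently, so Khintchine's inequality (with the constant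
`√3` coming from fourth moments) gives `E|Z| ≥ Σᵢ E|x (π aᵢ) - x (π bᵢ)| / √(3r)`, and each of these
pair means is at least `Σ |xᵢ| / (n - 1)` because the population sums to zero. Altogether
`P(X_P > 0) ≥ √r / (4 √3 (n - 1))`, which dominates the claimed bound.
-/

open Finset
open scoped Pointwise

theorem sum_sq_pow_three_le {β : Type*} (s : Finset β) (f : β → ℝ) :
    (∑ i ∈ s, f i ^ 2) ^ 3 ≤ (∑ i ∈ s, |f i|) ^ 2 * ∑ i ∈ s, f i ^ 4 := by
  have h₁ : (∑ i ∈ s, f i ^ 2) ^ 2 ≤ (∑ i ∈ s, |f i|) * ∑ i ∈ s, |f i| ^ 3 :=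
    sum_sq_le_sum_mul_sum_of_sq_le_mul s (fun i _ => abs_nonneg _) (fun i _ => by positivity)
      fun i _ => le_of_eq (by rw [← sq_abs (f i)]; ring)
  have h₂ : (∑ i ∈ s, |f i| ^ 3) ^ 2 ≤ (∑ i ∈ s, f i ^ 2) * ∑ i ∈ s, f i ^ 4 :=
    sum_sq_le_sum_mul_sum_of_sq_le_mul s (fun i _ => sq_nonneg _) (fun i _ => by positivity)
      fun i _ => le_of_eq (by rw [show f i ^ 4 = (f i ^ 2) ^ 2 by ring, ← sq_abs (f i)]; ring)
  have hA : 0 ≤ ∑ i ∈ s, f i ^ 2 := sum_nonneg fun i _ => sq_nonneg _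
  have hL : 0 ≤ ∑ i ∈ s, |f i| := sum_nonneg fun i _ => abs_nonneg _
  have hC : 0 ≤ ∑ i ∈ s, |f i| ^ 3 := sum_nonneg fun i _ => by positivity
  rcases hA.eq_or_lt with hA0 | hApos
  · rw [← hA0, zero_pow three_ne_zero]; positivity
  · nlinarith [mul_le_mul_of_nonneg_left h₂ (sq_nonneg (∑ i ∈ s, |f i|)),
      pow_le_pow_left₀ (by positivity) h₁ 2]

section Khintchine

variable {ι : Type*} [DecidableEq ι]

def signedSum (d : ι → ℝ) (T s : Finset ι) : ℝ :=
  ∑ t ∈ T, if t ∈ s then -d t else d t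

theorem sum_powerset_insert_signedSum {a : ι} {T : Finset ι} (ha : a ∉ T) (d : ι → ℝ)
    (F : ℝ → ℝ) :
    ∑ s ∈ (insert a T).powerset, F (signedSum d (insert a T) s) =
      ∑ s ∈ T.powerset, (F (signedSum d T s + d a) + F (signedSum d T s - d a)) := by
  rw [sum_powerset_insert ha, ← sum_add_distrib]
  refine sum_congr rfl fun s hs => ?_
  have has : a ∉ s := fun h => ha (mem_powerset.1 hs h)
  have hT : ∀ t ∈ T, (if t ∈ insert a s then -d t else d t) = if t ∈ s then -d t else d t :=
    fun t ht => by simp [ne_of_mem_of_not_mem ht ha]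
  simp only [signedSum, sum_insert ha, sum_congr rfl hT, if_neg has, mem_insert_self, if_true]
  ring_nf

theorem sum_powerset_signedSum_sq (d : ι → ℝ) (T : Finset ι) :
    ∑ s ∈ T.powerset, signedSum d T s ^ 2 = 2 ^ #T * ∑ t ∈ T, d t ^ 2 := by
  induction T using Finset.induction_on with
  | empty => simp [signedSum]
  | @insert a T ha ih =>
    rw [sum_powerset_insert_signedSum ha d (· ^ 2), sum_insert ha, card_insert_of_notMem ha]
    have hpt : ∀ z, (z + d a) ^ 2 + (z - d a) ^ 2 = 2 * z ^ 2 + 2 * d a ^ 2 := fun z => by ring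
    simp only [hpt, sum_add_distrib, ← mul_sum, ih, sum_const, card_powerset, nsmul_eq_mul]
    push_cast
    ring

theorem sum_powerset_signedSum_pow_four_le (d : ι → ℝ) (T : Finset ι) :
    ∑ s ∈ T.powerset, signedSum d T s ^ 4 ≤ 3 * 2 ^ #T * (∑ t ∈ T, d t ^ 2) ^ 2 := by
  induction T using Finset.induction_on with
  | empty => simp [signedSum]
  | @insert a T ha ih =>
    rw [sum_powerset_insert_signedSum ha d (· ^ 4), sum_insert ha, card_insert_of_notMem ha]
    have hpt : ∀ z, (z + d a) ^ 4 + (z - d a) ^ 4 =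
        2 * z ^ 4 + 12 * d a ^ 2 * z ^ 2 + 2 * d a ^ 4 := fun z => by ring
    simp only [hpt, sum_add_distrib, ← mul_sum, sum_powerset_signedSum_sq, sum_const,
      card_powerset, nsmul_eq_mul]
    have hQ : 0 ≤ ∑ t ∈ T, d t ^ 2 := sum_nonneg fun t _ => sq_nonneg _
    have h2 : (0 : ℝ) < 2 ^ #T := by positivity
    push_cast
    rw [pow_succ (2 : ℝ) #T]
    nlinarith [mul_nonneg (mul_nonneg h2.le (sq_nonneg (d a))) (sq_nonneg (d a)),
      mul_nonneg (mul_nonneg h2.le hQ) (sq_nonneg (d a))]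

/-- Khintchine's inequality with constant `√3`: over the sign patterns, the mean of `Z²` is at
most `(mean |Z|)^(2/3) (mean Z⁴)^(1/3)` by `sum_sq_pow_three_le`, and the mean of `Z⁴` is at most
three times the square of the mean of `Z²`. -/
theorem two_pow_mul_sum_abs_le_sqrt_mul_sum_abs_signedSum (d : ι → ℝ) (T : Finset ι) :
    2 ^ #T * ∑ t ∈ T, |d t| ≤ √(3 * #T) * ∑ s ∈ T.powerset, |signedSum d T s| := by
  set Q := ∑ t ∈ T, d t ^ 2
  set L := ∑ s ∈ T.powerset, |signedSum d T s|
  have hQ : 0 ≤ Q := sum_nonneg fun t _ => sq_nonneg _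
  have hHolder := sum_sq_pow_three_le T.powerset (signedSum d T)
  rw [sum_powerset_signedSum_sq] at hHolder
  have hcube : (2 ^ #T) ^ 3 * Q ^ 3 ≤ 3 * 2 ^ #T * Q ^ 2 * L ^ 2 := by
    calc (2 ^ #T) ^ 3 * Q ^ 3 = (2 ^ #T * Q) ^ 3 := by ring
      _ ≤ L ^ 2 * ∑ s ∈ T.powerset, signedSum d T s ^ 4 := hHolder
      _ ≤ L ^ 2 * (3 * 2 ^ #T * Q ^ 2) := by
        gcongr; exact sum_powerset_signedSum_pow_four_le d T
      _ = 3 * 2 ^ #T * Q ^ 2 * L ^ 2 := by ring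
  have hQL : (2 ^ #T) ^ 2 * Q ≤ 3 * L ^ 2 := by
    rcases hQ.eq_or_lt with hQ0 | hQpos
    · rw [← hQ0, mul_zero]; positivity
    · have : 0 < 2 ^ #T * Q ^ 2 := by positivity
      nlinarith
  have hCS : (∑ t ∈ T, |d t|) ^ 2 ≤ #T * Q := by
    simpa only [sq_abs] using sq_sum_le_card_mul_sum_sq (s := T) (f := fun t => |d t|)
  rw [← pow_le_pow_iff_left₀ (by positivity) (by positivity) two_ne_zero, mul_pow,
    mul_pow, Real.sq_sqrt (by positivity)]
  calc (2 ^ #T) ^ 2 * (∑ t ∈ T, |d t|) ^ 2 ≤ (2 ^ #T) ^ 2 * (#T * Q) := by gcongr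
    _ = #T * ((2 ^ #T) ^ 2 * Q) := by ring
    _ ≤ #T * (3 * L ^ 2) := by gcongr
    _ = 3 * #T * L ^ 2 := by ring

end Khintchine

theorem MulAction.card_nsmul_sum_smul {G X M : Type*} [Group G] [Fintype G] [MulAction G X]
    [Fintype X] [MulAction.IsPretransitive G X] [AddCommMonoid M] (F : X → M) (x : X) :
    Fintype.card X • ∑ g : G, F (g • x) = Fintype.card G • ∑ y, F y := by
  have hconst : ∀ y : X, ∑ g : G, F (g • y) = ∑ g : G, F (g • x) := fun y => by
    obtain ⟨h, rfl⟩ := MulAction.exists_smul_eq G x y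
    exact Fintype.sum_equiv (Equiv.mulRight h) _ _ fun g => by simp [mul_smul]
  calc Fintype.card X • ∑ g : G, F (g • x) = ∑ y : X, ∑ g : G, F (g • y) := by
        simp [hconst]
    _ = ∑ g : G, ∑ y : X, F (g • y) := sum_comm
    _ = ∑ _g : G, ∑ y, F y := sum_congr rfl fun g _ => Equiv.sum_comp (MulAction.toPerm g) F
    _ = Fintype.card G • ∑ y, F y := by rw [sum_const, card_univ]

theorem sum_abs_le_two_mul_card_filter_pos {β : Type*} {s : Finset β} {f : β → ℝ} {M : ℝ}
    (hsum : ∑ i ∈ s, f i = 0) (hM : ∀ i ∈ s, f i ≤ M) :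
    ∑ i ∈ s, |f i| ≤ 2 * M * #{i ∈ s | 0 < f i} := by
  have habs : ∀ i, |f i| = 2 * (if 0 < f i then f i else 0) - f i := fun i => by
    split_ifs with h
    · rw [abs_of_pos h]; ring
    · rw [abs_of_nonpos (not_lt.1 h)]; ring
  have hpos : ∑ i ∈ s with 0 < f i, f i ≤ #{i ∈ s | 0 < f i} * M := by
    rw [← nsmul_eq_mul]
    exact sum_le_card_nsmul _ _ _ fun i hi => hM i (mem_filter.1 hi).1
  simp only [habs, sum_sub_distrib, ← mul_sum, ← sum_filter, hsum]
  linarith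

section Perm

variable {α : Type*} [DecidableEq α]

theorem exists_perm_swap_pairs {ι : Type*} [DecidableEq ι] {a b : ι → α}
    (ha : Function.Injective a) (hb : Function.Injective b) (hab : ∀ i j, a i ≠ b j)
    (s : Finset ι) :
    ∃ σ : Equiv.Perm α, ∀ i, σ (a i) = (if i ∈ s then b i else a i) ∧
      σ (b i) = (if i ∈ s then a i else b i) := by
  induction s using Finset.induction_on with
  | empty => exact ⟨1, fun i => by simp⟩
  | @insert u s hu ih =>
    obtain ⟨σ, hσ⟩ := ih
    refine ⟨σ * Equiv.swap (a u) (b u), fun i => ?_⟩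
    rcases eq_or_ne i u with rfl | hiu
    · simp [hσ, hu]
    · have h₁ : Equiv.swap (a u) (b u) (a i) = a i :=
        Equiv.swap_apply_of_ne_of_ne (ha.ne hiu) (hab i u)
      have h₂ : Equiv.swap (a u) (b u) (b i) = b i :=
        Equiv.swap_apply_of_ne_of_ne (hab u i).symm (hb.ne hiu)
      simp [h₁, h₂, hσ, hiu]

variable [Fintype α] {x : α → ℝ}

theorem card_mul_sum_perm_apply (h : α → ℝ) (a : α) :
    Fintype.card α * ∑ π : Equiv.Perm α, h (π a) = (Fintype.card α).factorial * ∑ u, h u := by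
  simpa [Fintype.card_perm] using MulAction.card_nsmul_sum_smul (G := Equiv.Perm α) h a

theorem choose_mul_sum_perm_smul (F : Finset α → ℝ) {k : ℕ} {K : Finset α} (hK : #K = k) :
    (Fintype.card α).choose k * ∑ π : Equiv.Perm α, F (π • K) =
      (Fintype.card α).factorial * ∑ J ∈ powersetCard k univ, F J := by
  have := Set.powersetCard.isPretransitive (α := α) (n := k)
  have h := MulAction.card_nsmul_sum_smul (G := Equiv.Perm α)
    (fun J : Set.powersetCard α k => F J) ⟨K, hK⟩
  rw [Fintype.card_eq_nat_card, Set.powersetCard.card, Nat.card_eq_fintype_card,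
    Fintype.card_perm, ← sum_subtype (powersetCard k univ) (by simp) F] at h
  simpa only [Set.powersetCard.coe_smul, nsmul_eq_mul, Nat.cast_id] using h

theorem card_sub_one_mul_sum_perm_apply_apply (g : α → α → ℝ) (hg : ∀ u, g u u = 0) {a b : α}
    (hab : a ≠ b) :
    (Fintype.card α - 1 : ℝ) * ∑ π : Equiv.Perm α, g (π a) (π b) =
      ∑ π : Equiv.Perm α, ∑ v, g (π a) v := by
  have hslot : ∀ c ∈ univ.erase a, ∑ π : Equiv.Perm α, g (π a) (π c) =
      ∑ π : Equiv.Perm α, g (π a) (π b) := fun c hc =>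
    Fintype.sum_equiv (Equiv.mulRight (Equiv.swap b c)) _ _ fun π => by
      simp [Equiv.swap_apply_of_ne_of_ne hab (ne_of_mem_erase hc).symm]
  calc (Fintype.card α - 1 : ℝ) * ∑ π : Equiv.Perm α, g (π a) (π b)
      = ∑ c ∈ univ.erase a, ∑ π : Equiv.Perm α, g (π a) (π c) := by
        rw [sum_congr rfl hslot, sum_const, card_erase_of_mem (mem_univ a), card_univ,
          nsmul_eq_mul, Nat.cast_pred (Fintype.card_pos_iff.2 ⟨a⟩)]
    _ = ∑ π : Equiv.Perm α, ∑ c ∈ univ.erase a, g (π a) (π c) := sum_comm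
    _ = ∑ π : Equiv.Perm α, ∑ v, g (π a) v := sum_congr rfl fun π _ => by
        rw [sum_erase univ (f := fun c => g (π a) (π c)) (hg (π a)), Equiv.sum_comp π (g (π a))]

theorem factorial_mul_sum_abs_le_sum_perm_abs_sub (hsum : ∑ u, x u = 0) {a b : α}
    (hab : a ≠ b) :
    (Fintype.card α).factorial * ∑ u, |x u| ≤
      (Fintype.card α - 1 : ℝ) * ∑ π : Equiv.Perm α, |x (π a) - x (π b)| := by
  have hrow : ∀ u, Fintype.card α * |x u| ≤ ∑ v, |x u - x v| := fun u => by
    calc Fintype.card α * |x u| = |∑ v, (x u - x v)| := by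
          simp [sum_sub_distrib, hsum, abs_mul]
      _ ≤ ∑ v, |x u - x v| := abs_sum_le_sum_abs _ _
  calc (Fintype.card α).factorial * ∑ u, |x u|
      = ∑ π : Equiv.Perm α, Fintype.card α * |x (π a)| := by
        rw [← mul_sum, card_mul_sum_perm_apply (fun u => |x u|)]
    _ ≤ ∑ π : Equiv.Perm α, ∑ v, |x (π a) - x v| := sum_le_sum fun π _ => hrow (π a)
    _ = (Fintype.card α - 1 : ℝ) * ∑ π : Equiv.Perm α, |x (π a) - x (π b)| :=
        (card_sub_one_mul_sum_perm_apply_apply (fun u v => |x u - x v|) (by simp) hab).symm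

theorem choose_mul_sum_perm_abs_le {κ : Type*} [Fintype κ] (hsum : ∑ u, x u = 0) (g : κ ↪ α) :
    (Fintype.card α).choose (Fintype.card κ) * ∑ π : Equiv.Perm α, |∑ j, x (π (g j))| ≤
      2 * (∑ u, |x u|) * (Fintype.card α).factorial *
        #{J ∈ powersetCard (Fintype.card κ) univ | 0 < ∑ j ∈ J, x j} := by
  have hK : #(univ.map g) = Fintype.card κ := by simp
  have hY : ∀ π : Equiv.Perm α, ∑ j ∈ π • univ.map g, x j = ∑ j, x (π (g j)) := fun π => by
    simp [smul_finset_def, Equiv.Perm.smul_def]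
  have hperm : ∀ u, ∑ π : Equiv.Perm α, x (π u) = 0 := fun u => by
    have h := card_mul_sum_perm_apply x u
    rw [hsum, mul_zero] at h
    exact (mul_eq_zero.1 h).resolve_left (Nat.cast_ne_zero.2 (Fintype.card_pos_iff.2 ⟨u⟩).ne')
  have hJ : ∑ J ∈ powersetCard (Fintype.card κ) univ, ∑ j ∈ J, x j = 0 := by
    have h := choose_mul_sum_perm_smul (fun J => ∑ j ∈ J, x j) hK
    simp only [hY, sum_comm (γ := Equiv.Perm α), hperm, sum_const_zero, mul_zero] at h
    exact (mul_eq_zero.1 h.symm).resolve_left (Nat.cast_ne_zero.2 (Nat.factorial_ne_zero _))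
  have hle : ∀ J ∈ powersetCard (Fintype.card κ) univ, ∑ j ∈ J, x j ≤ ∑ u, |x u| := fun J _ =>
    (sum_le_sum fun j _ => le_abs_self (x j)).trans
      (sum_le_sum_of_subset_of_nonneg (subset_univ J) fun u _ _ => abs_nonneg (x u))
  have h := choose_mul_sum_perm_smul (fun J => |∑ j ∈ J, x j|) hK
  simp only [hY] at h
  rw [h]
  calc ((Fintype.card α).factorial : ℝ) *
        ∑ J ∈ powersetCard (Fintype.card κ) univ, |∑ j ∈ J, x j|
      ≤ (Fintype.card α).factorial *
          (2 * (∑ u, |x u|) * #{J ∈ powersetCard (Fintype.card κ) univ | 0 < ∑ j ∈ J, x j}) := by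
        gcongr
        exact sum_abs_le_two_mul_card_filter_pos hJ hle
    _ = _ := by ring

section Pairs

variable {ι : Type*} [Fintype ι] [DecidableEq ι] {a b : ι → α}

theorem sum_perm_sum_abs_sub_le (ha : Function.Injective a)
    (hb : Function.Injective b) (hab : ∀ i j, a i ≠ b j) :
    ∑ π : Equiv.Perm α, ∑ i, |x (π (a i)) - x (π (b i))| ≤
      √(3 * Fintype.card ι) * ∑ π : Equiv.Perm α, |∑ i, (x (π (a i)) - x (π (b i)))| := by
  choose σ hσ using exists_perm_swap_pairs ha hb hab
  set d : Equiv.Perm α → ι → ℝ := fun π i => x (π (a i)) - x (π (b i))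
  have hflip : ∀ s π, ∑ i, d (π * σ s) i = signedSum (d π) univ s := fun s π =>
    sum_congr rfl fun i _ => by
      simp only [d, Equiv.Perm.mul_apply, hσ]
      split_ifs <;> ring
  refine le_of_mul_le_mul_left ?_ (by positivity : (0 : ℝ) < 2 ^ Fintype.card ι)
  calc 2 ^ Fintype.card ι * ∑ π, ∑ i, |d π i|
      ≤ ∑ π, √(3 * Fintype.card ι) *
          ∑ s ∈ (univ : Finset ι).powerset, |signedSum (d π) univ s| := by
        rw [mul_sum]
        exact sum_le_sum fun π _ => two_pow_mul_sum_abs_le_sqrt_mul_sum_abs_signedSum (d π) univ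
    _ = √(3 * Fintype.card ι) * ∑ s : Finset ι, ∑ π, |∑ i, d (π * σ s) i| := by
        simp only [hflip, powerset_univ, ← mul_sum]
        rw [sum_comm]
    _ = √(3 * Fintype.card ι) * ∑ _s : Finset ι, ∑ π, |∑ i, d π i| := by
        congr 1
        exact sum_congr rfl fun s _ =>
          Equiv.sum_comp (Equiv.mulRight (σ s)) fun π => |∑ i, d π i|
    _ = 2 ^ Fintype.card ι * (√(3 * Fintype.card ι) * ∑ π, |∑ i, d π i|) := by
        rw [sum_const, card_univ, Fintype.card_finset, nsmul_eq_mul]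
        push_cast
        ring

theorem sqrt_card_mul_factorial_mul_sum_abs_le (hsum : ∑ u, x u = 0)
    (ha : Function.Injective a) (hb : Function.Injective b) (hab : ∀ i j, a i ≠ b j) :
    √(Fintype.card ι) * ((Fintype.card α).factorial * ∑ u, |x u|) ≤
      √3 * (Fintype.card α - 1) * ∑ π : Equiv.Perm α, |∑ i, (x (π (a i)) - x (π (b i)))| := by
  rcases isEmpty_or_nonempty ι with hι | hι
  · simp
  have : Nonempty α := ⟨a hι.some⟩
  have hn : (0 : ℝ) ≤ Fintype.card α - 1 := sub_nonneg.2 (Nat.one_le_cast.2 Fintype.card_pos)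
  have hcard : (0 : ℝ) < Fintype.card ι := Nat.cast_pos.2 Fintype.card_pos
  refine le_of_mul_le_mul_left ?_ (Real.sqrt_pos.2 hcard)
  calc √(Fintype.card ι) * (√(Fintype.card ι) * ((Fintype.card α).factorial * ∑ u, |x u|))
      = ∑ _i : ι, (Fintype.card α).factorial * ∑ u, |x u| := by
        rw [← mul_assoc, Real.mul_self_sqrt hcard.le]; simp
    _ ≤ ∑ i : ι, (Fintype.card α - 1) * ∑ π : Equiv.Perm α, |x (π (a i)) - x (π (b i))| :=
        sum_le_sum fun i _ => factorial_mul_sum_abs_le_sum_perm_abs_sub hsum (hab i i)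
    _ = (Fintype.card α - 1) * ∑ π : Equiv.Perm α, ∑ i, |x (π (a i)) - x (π (b i))| := by
        rw [← mul_sum, sum_comm]
    _ ≤ (Fintype.card α - 1) * (√(3 * Fintype.card ι) *
          ∑ π : Equiv.Perm α, |∑ i, (x (π (a i)) - x (π (b i)))|) :=
        mul_le_mul_of_nonneg_left (sum_perm_sum_abs_sub_le ha hb hab) hn
    _ = _ := by rw [Real.sqrt_mul zero_le_three]; ring

end Pairs

theorem choose_mul_sum_perm_abs_sum_sub_le {ι κ : Type*} [Fintype ι] [Fintype κ]
    (hsum : ∑ u, x u = 0) (f : ι ⊕ ι ⊕ κ ↪ α) :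
    (Fintype.card α).choose (Fintype.card ι + Fintype.card κ) *
        ∑ π : Equiv.Perm α, |∑ i, (x (π (f (.inl i))) - x (π (f (.inr (.inl i)))))| ≤
      4 * (∑ u, |x u|) * (Fintype.card α).factorial *
        #{J ∈ powersetCard (Fintype.card ι + Fintype.card κ) univ | 0 < ∑ j ∈ J, x j} := by
  let g₁ := (Function.Embedding.sumMap (.refl _) .inr).trans f
  let g₂ : ι ⊕ κ ↪ α := Function.Embedding.inr.trans f
  have hZ : ∀ π : Equiv.Perm α, |∑ i, (x (π (f (.inl i))) - x (π (f (.inr (.inl i)))))| ≤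
      |∑ j, x (π (g₁ j))| + |∑ j, x (π (g₂ j))| := fun π => by
    have : ∑ i, (x (π (f (.inl i))) - x (π (f (.inr (.inl i))))) =
        ∑ j, x (π (g₁ j)) - ∑ j, x (π (g₂ j)) := by
      simp [g₁, g₂, Fintype.sum_sum_type, sum_sub_distrib]
    rw [this]
    exact abs_sub _ _
  have hY₁ := choose_mul_sum_perm_abs_le hsum g₁
  have hY₂ := choose_mul_sum_perm_abs_le hsum g₂
  rw [Fintype.card_sum] at hY₁ hY₂
  calc _ ≤ ((Fintype.card α).choose (Fintype.card ι + Fintype.card κ) : ℝ) *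
        ∑ π : Equiv.Perm α, (|∑ j, x (π (g₁ j))| + |∑ j, x (π (g₂ j))|) := by
        gcongr with π
        exact hZ π
    _ = _ := by rw [sum_add_distrib, mul_add]
    _ ≤ _ := add_le_add hY₁ hY₂
    _ = _ := by ring

theorem sqrt_mul_choose_le_card_filter_sum_pos (hsum : ∑ u, x u = 0) (habs : 0 < ∑ u, |x u|)
    {k r : ℕ} (hrk : r ≤ k) (hkr : k + r ≤ Fintype.card α) :
    √r * (Fintype.card α).choose k ≤
      4 * √3 * (Fintype.card α - 1) * #{J ∈ powersetCard k univ | 0 < ∑ j ∈ J, x j} := by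
  have : Nonempty α := by
    rcases isEmpty_or_nonempty α with h | h
    · simp [univ_eq_empty] at habs
    · exact h
  obtain ⟨f⟩ : Nonempty (Fin r ⊕ Fin r ⊕ Fin (k - r) ↪ α) :=
    Function.Embedding.nonempty_of_card_le
      (by simp only [Fintype.card_sum, Fintype.card_fin]; omega)
  have hpairs := sqrt_card_mul_factorial_mul_sum_abs_le hsum
    (a := fun i => f (.inl i)) (b := fun i => f (.inr (.inl i)))
    (fun i j h => Sum.inl_injective (f.injective h))
    (fun i j h => Sum.inl_injective (Sum.inr_injective (f.injective h)))
    (fun i j h => Sum.inl_ne_inr (f.injective h))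
  have hZ := choose_mul_sum_perm_abs_sum_sub_le hsum f
  rw [Fintype.card_fin] at hpairs
  rw [Fintype.card_fin, Fintype.card_fin, Nat.add_sub_cancel' hrk] at hZ
  have hn : (0 : ℝ) ≤ √3 * (Fintype.card α - 1) :=
    mul_nonneg (Real.sqrt_nonneg 3) (sub_nonneg.2 (Nat.one_le_cast.2 Fintype.card_pos))
  refine le_of_mul_le_mul_right ?_
    (by positivity : 0 < ((Fintype.card α).factorial : ℝ) * ∑ u, |x u|)
  calc _ = ((Fintype.card α).choose k : ℝ) *
        (√r * ((Fintype.card α).factorial * ∑ u, |x u|)) := by ring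
    _ ≤ (Fintype.card α).choose k * (√3 * (Fintype.card α - 1) *
        ∑ π : Equiv.Perm α, |∑ i, (x (π (f (.inl i))) - x (π (f (.inr (.inl i)))))|) := by
        gcongr
    _ = √3 * (Fintype.card α - 1) * ((Fintype.card α).choose k *
        ∑ π : Equiv.Perm α, |∑ i, (x (π (f (.inl i))) - x (π (f (.inr (.inl i)))))|) := by ring
    _ ≤ _ := mul_le_mul_of_nonneg_left hZ hn
    _ = _ := by ring

end Perm

theorem exp_neg_one_third_div_le : Real.exp (-1 / 3) / (8 * √(2 * Real.pi)) ≤ 1 / 16 := by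
  have hexp : Real.exp (-1 / 3) ≤ 1 := Real.exp_le_one_iff.2 (by norm_num)
  have hsqrt : 2 ≤ √(2 * Real.pi) :=
    Real.le_sqrt_of_sq_le (by nlinarith [Real.two_le_pi])
  rw [div_le_div_iff₀ (by positivity) (by norm_num)]
  nlinarith [Real.exp_pos (-1 / 3)]

theorem div_mul_sqrt_le_sqrt_min_div {k n : ℕ} (hkn : k ≤ n) :
    (k / n : ℝ) * √((n - k) / (n * k)) ≤ √(min k (n - k) : ℕ) / n := by
  have hmin : (k : ℝ) * (n - k) ≤ (min k (n - k) : ℕ) * n := by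
    have h : k * (n - k) ≤ min k (n - k) * n := by
      rcases le_total k (n - k) with h | h
      · rw [min_eq_left h]; exact Nat.mul_le_mul_left k (Nat.sub_le n k)
      · rw [min_eq_right h, mul_comm]; exact Nat.mul_le_mul_left _ hkn
    rw [← Nat.cast_sub hkn]
    exact_mod_cast h
  have hnk : (0 : ℝ) ≤ n - k := sub_nonneg.2 (by exact_mod_cast hkn)
  rw [← pow_le_pow_iff_left₀ (by positivity) (by positivity) two_ne_zero, mul_pow, div_pow,
    div_pow, Real.sq_sqrt (by positivity), Real.sq_sqrt (by positivity)]
  rcases (Nat.zero_le n).eq_or_lt with rfl | hn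
  · simp
  rcases (Nat.zero_le k).eq_or_lt with rfl | hk
  · simp
  rw [div_mul_div_comm, div_le_div_iff₀ (by positivity) (by positivity)]
  have : (0 : ℝ) < k * n ^ 2 := by positivity
  nlinarith

theorem prob_pos_lower_bound_general
    {n : ℕ} (k : ℕ) (hk : k ∈ Finset.Icc 1 (n - 1))
    (x : Fin n → ℝ) (hsum : ∑ i, x i = 0) (habs : 0 < ∑ i, |x i|) :
    Real.exp (-1/3) / (8 * Real.sqrt (2 * Real.pi)) * ((k : ℝ) / n)
        * Real.sqrt (((n : ℝ) - k) / ((n : ℝ) * k))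
      ≤ (((univ : Finset (Fin n)).powersetCard k |>.filter
            (fun F => 0 < ∑ i ∈ F, x i)).card : ℝ) / (n.choose k : ℝ) := by
  obtain ⟨hk1, hkn⟩ := mem_Icc.1 hk
  have hkey := sqrt_mul_choose_le_card_filter_sum_pos (x := x) hsum habs
    (min_le_left k (n - k)) (by rw [Fintype.card_fin]; omega)
  rw [Fintype.card_fin] at hkey
  set m := #{J ∈ powersetCard k univ | 0 < ∑ j ∈ J, x j}
  have hN : (0 : ℝ) < n.choose k := Nat.cast_pos.2 (Nat.choose_pos (by omega))
  have hn1 : (1 : ℝ) ≤ n := by exact_mod_cast (by omega : 1 ≤ n)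
  have h3 : √3 ≤ 2 := Real.sqrt_le_iff.2 ⟨by norm_num, by norm_num⟩
  have h3m := mul_le_mul_of_nonneg_right h3 (by positivity : (0 : ℝ) ≤ (n - 1) * m)
  calc Real.exp (-1/3) / (8 * √(2 * Real.pi)) * ((k : ℝ) / n) * √((n - k) / (n * k))
      = Real.exp (-1/3) / (8 * √(2 * Real.pi)) * ((k / n) * √((n - k) / (n * k))) := by ring
    _ ≤ 1 / 16 * (√(min k (n - k) : ℕ) / n) :=
        mul_le_mul exp_neg_one_third_div_le (div_mul_sqrt_le_sqrt_min_div (by omega))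
          (by positivity) (by norm_num)
    _ = √(min k (n - k) : ℕ) * n.choose k / (16 * n) / n.choose k := by field_simp
    _ ≤ 4 * √3 * (n - 1) * m / (16 * n) / n.choose k := by gcongr
    _ ≤ m / n.choose k := by
        gcongr
        rw [div_le_iff₀ (by positivity)]
        nlinarith

/-- Main theorem: lower bound on `P(X_P > 0)` for the sum of a uniformly random
`k`-subset of a zero-sum population which is not identically zero. -/
theorem prob_pos_lower_bound
    {n : ℕ} (hn : 2 ≤ n) (k : ℕ) (hk : k ∈ Finset.Icc 1 (n - 1))
    (x : Fin n → ℝ) (hsum : ∑ i, x i = 0) (habs : 0 < ∑ i, |x i|) :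
    Real.exp (-1/3) / (8 * Real.sqrt (2 * Real.pi)) * ((k : ℝ) / n)
        * Real.sqrt (((n : ℝ) - k) / ((n : ℝ) * k))
      ≤ (((univ : Finset (Fin n)).powersetCard k |>.filter
            (fun F => 0 < ∑ i ∈ F, x i)).card : ℝ) / (n.choose k : ℝ) :=
  prob_pos_lower_bound_general k hk x hsum habs
end

section
/- Let P = (x₁,...,xₙ) with Σxᵢ = 0 and Σ|xᵢ| = 2α for some α > 0, let k ∈ [n-1], and let X_P be the sum of a uniformly random k-subset of P. Then for every t ∈ (0, α): P(X_P ≥ t) ≤ 1 - min{1, t/(α-t)}·(1 - 2k(n-k)/(n(n-1))). -/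
/-!
Split `x = x⁺ - x⁻`, so that `∑ x⁺ = ∑ x⁻ = α`, and write `p = P(X ≥ t)`. Two bounds on `p`
are combined. Markov: `X` has mean `0` and `X ≥ -α`, so `p (α + t) ≤ α`. Second: on the event
`X_F ≥ t` the product `(∑_{i ∈ F} x⁺ᵢ) (∑_{j ∉ F} x⁻ⱼ)` is at least `α t`, while its mean is at most
`P(i ∈ F, j ∉ F) α² = k (n - k) / (n (n - 1)) α²`, so `2 p t ≤ Q α` with `Q = 2k(n-k)/(n(n-1))`.
The claimed bound is what these two inequalities give after an elementary case analysis.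
-/

open Finset

section Counting

variable {ι : Type*} [Fintype ι] [DecidableEq ι]

theorem sum_sum_mem_eq_sum_card_filter_smul {M : Type*} [AddCommMonoid M]
    (S : Finset (Finset ι)) (f : ι → M) :
    ∑ F ∈ S, ∑ i ∈ F, f i = ∑ i, #{F ∈ S | i ∈ F} • f i := by
  rw [sum_comm' (t' := univ) (s' := fun i => {F ∈ S | i ∈ F}) (by simp)]
  simp only [sum_const]

theorem sum_sum_compl_eq_sum_card_filter_smul {M : Type*} [AddCommMonoid M]
    (S : Finset (Finset ι)) (g : ι → ι → M) :
    ∑ F ∈ S, ∑ i ∈ F, ∑ j ∈ Fᶜ, g i j = ∑ i, ∑ j, #{F ∈ S | i ∈ F ∧ j ∉ F} • g i j := by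
  simp_rw [← sum_product' (f := g), ← Fintype.sum_prod_type']
  rw [sum_comm' (t' := univ) (s' := fun p => {F ∈ S | p.1 ∈ F ∧ p.2 ∉ F}) (by simp)]
  simp only [sum_const]

theorem card_filter_mem_powersetCard_univ {k : ℕ} (hk : 1 ≤ k) (i : ι) :
    #{F ∈ powersetCard k univ | i ∈ F} = (Fintype.card ι - 1).choose (k - 1) := by
  simpa [card_singleton, singleton_subset_iff] using
    card_filter_powersetCard_subset {i} univ k (subset_univ _) (by simpa using hk)

theorem card_filter_mem_notMem_powersetCard_univ_le {k : ℕ} (hk : 1 ≤ k) (i j : ι) :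
    #{F ∈ powersetCard k univ | i ∈ F ∧ j ∉ F} ≤ (Fintype.card ι - 2).choose (k - 1) := by
  by_cases hij : i = j
  · simp [hij]
  have : {F ∈ powersetCard k (univ : Finset ι) | i ∈ F ∧ j ∉ F} =
      {F ∈ powersetCard k (univ.erase j) | {i} ⊆ F} := by
    ext F
    simp only [mem_filter, mem_powersetCard, subset_erase, singleton_subset_iff, subset_univ,
      true_and]
    tauto
  rw [this, card_filter_powersetCard_subset _ _ _ (by simpa using hij) (by simpa using hk)]
  simp [card_erase_of_mem, Nat.sub_sub]

end Counting

theorem choose_sub_two_div_choose {n k : ℕ} (hn : 2 ≤ n) (hk : 1 ≤ k) (hkn : k ≤ n) :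
    ((n - 2).choose (k - 1) : ℝ) / n.choose k = k * (n - k) / (n * (n - 1)) := by
  obtain ⟨l, rfl⟩ : ∃ l, n = l + 2 := ⟨n - 2, by omega⟩
  obtain ⟨j, rfl⟩ : ∃ j, k = j + 1 := ⟨k - 1, by omega⟩
  have h₁ := congrArg (Nat.cast : ℕ → ℝ) (Nat.add_one_mul_choose_eq (l + 1) j)
  have h₂ := congrArg (Nat.cast : ℕ → ℝ) (Nat.choose_mul_succ_eq l j)
  have hC : ((l + 2).choose (j + 1) : ℝ) ≠ 0 := by exact_mod_cast (Nat.choose_pos hkn).ne'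
  push_cast [Nat.cast_sub (show j ≤ l + 1 by omega)] at h₁ h₂ hC ⊢
  rw [div_eq_div_iff hC (mul_pos (by positivity) (by linarith [(l.cast_nonneg : (0 : ℝ) ≤ l)])).ne']
  linear_combination ((l:ℝ) + 2) * h₂ + ((l:ℝ) + 1 - j) * h₁

theorem card_filter_mul_add_le_of_sum_eq_zero {β : Type*} (S : Finset β) (f : β → ℝ)
    (hf : ∑ b ∈ S, f b = 0) {a : ℝ} (hlow : ∀ b ∈ S, -a ≤ f b) (t : ℝ) :
    (#{b ∈ S | t ≤ f b} : ℝ) * (a + t) ≤ a * #S := by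
  have hhigh : (#{b ∈ S | t ≤ f b} : ℝ) * t ≤ ∑ b ∈ S with t ≤ f b, f b := by
    simpa using card_nsmul_le_sum _ f t fun b hb => (mem_filter.1 hb).2
  have hlow' : (#{b ∈ S | ¬t ≤ f b} : ℝ) * -a ≤ ∑ b ∈ S with ¬t ≤ f b, f b := by
    simpa using card_nsmul_le_sum _ f (-a) fun b hb => hlow b (mem_filter.1 hb).1
  have hcard : (#{b ∈ S | t ≤ f b} : ℝ) + #{b ∈ S | ¬t ≤ f b} = #S := by
    exact_mod_cast card_filter_add_card_filter_not _
  rw [← sum_filter_add_sum_filter_not S (t ≤ f ·)] at hf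
  linear_combination hhigh + hlow' + hf + a * hcard

theorem card_filter_mul_le_sum {β : Type*} (S : Finset β) (p : β → Prop) [DecidablePred p]
    {g : β → ℝ} (hg : ∀ b ∈ S, 0 ≤ g b) {c : ℝ} (hc : ∀ b ∈ S, p b → c ≤ g b) :
    (#{b ∈ S | p b} : ℝ) * c ≤ ∑ b ∈ S, g b :=
  calc (#{b ∈ S | p b} : ℝ) * c ≤ ∑ b ∈ S with p b, g b := by
        simpa using card_nsmul_le_sum _ g c fun b hb => hc b (mem_filter.1 hb).1 (mem_filter.1 hb).2
    _ ≤ ∑ b ∈ S, g b := sum_le_sum_of_subset_of_nonneg (filter_subset _ _) fun b hb _ => hg b hb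

theorem mul_le_mul_sub_of_le_sub {a t u v : ℝ} (ht : 0 ≤ t) (hv : 0 ≤ v) (htuv : t ≤ u - v)
    (hu : u ≤ a) : a * t ≤ u * (a - v) := by
  nlinarith [mul_nonneg (sub_nonneg.2 hu) (show 0 ≤ u - t by linarith)]

theorem le_one_sub_min_div_mul {P Q α t : ℝ} (ht : 0 < t) (htα : t < α) (hQ : 0 ≤ Q)
    (hmarkov : P * (α + t) ≤ α) (hsecond : 2 * P * t ≤ Q * α) :
    P ≤ 1 - min 1 (t / (α - t)) * (1 - Q) := by
  have hαt : 0 < α - t := by linarith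
  rcases le_or_gt α (2 * t) with hlarge | hsmall
  · rw [min_eq_left ((one_le_div hαt).2 (by linarith))]
    nlinarith
  · rw [min_eq_right ((div_le_one hαt).2 (by linarith)), div_mul_eq_mul_div,
      le_sub_comm, div_le_iff₀ hαt]
    -- Markov's bound is the better one exactly when `2 t ≤ Q (α + t)`.
    rcases le_or_gt t (Q * (α + t) / 2) with hQt | hQt
    · nlinarith
    · nlinarith

theorem sum_posPart_eq_and_sum_negPart_eq {ι : Type*} (s : Finset ι) {x : ι → ℝ} {α : ℝ}
    (hsum : ∑ i ∈ s, x i = 0) (habs : ∑ i ∈ s, |x i| = 2 * α) :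
    ∑ i ∈ s, (x i)⁺ = α ∧ ∑ i ∈ s, (x i)⁻ = α := by
  have hdiff : ∑ i ∈ s, (x i)⁺ - ∑ i ∈ s, (x i)⁻ = 0 := by
    rw [← sum_sub_distrib]; simpa only [posPart_sub_negPart] using hsum
  have hadd : ∑ i ∈ s, (x i)⁺ + ∑ i ∈ s, (x i)⁻ = 2 * α := by
    rw [← sum_add_distrib]; simpa only [posPart_add_negPart] using habs
  constructor <;> linarith

section Sampling

variable {ι : Type*} [Fintype ι] [DecidableEq ι] {k : ℕ} {x : ι → ℝ} {α : ℝ}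

theorem sum_powersetCard_sum_eq_zero (hk : 1 ≤ k) (hsum : ∑ i, x i = 0) :
    ∑ F ∈ powersetCard k univ, ∑ i ∈ F, x i = 0 := by
  simp_rw [sum_sum_mem_eq_sum_card_filter_smul, card_filter_mem_powersetCard_univ hk, ← smul_sum,
    hsum, smul_zero]

theorem sum_powersetCard_mul_sum_compl_le (hk : 1 ≤ k) {p m : ι → ℝ} (hp : 0 ≤ p) (hm : 0 ≤ m) :
    ∑ F ∈ powersetCard k univ, (∑ i ∈ F, p i) * ∑ j ∈ Fᶜ, m j
      ≤ (Fintype.card ι - 2).choose (k - 1) * ((∑ i, p i) * ∑ j, m j) := by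
  simp_rw [sum_mul_sum, sum_sum_compl_eq_sum_card_filter_smul, nsmul_eq_mul, mul_sum]
  gcongr with i _ j _
  · exact mul_nonneg (hp i) (hm j)
  · exact_mod_cast card_filter_mem_notMem_powersetCard_univ_le hk i j

theorem card_tail_mul_add_le (hk : 1 ≤ k) (hsum : ∑ i, x i = 0) (hneg : ∑ i, (x i)⁻ = α)
    (t : ℝ) :
    (#{F ∈ powersetCard k univ | t ≤ ∑ i ∈ F, x i} : ℝ) * (α + t)
      ≤ α * (Fintype.card ι).choose k := by
  have hlow : ∀ F : Finset ι, -α ≤ ∑ i ∈ F, x i := fun F =>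
    calc -α = -∑ i, (x i)⁻ := by rw [hneg]
      _ ≤ -∑ i ∈ F, (x i)⁻ :=
        neg_le_neg (sum_le_univ_sum_of_nonneg fun i => negPart_nonneg (x i))
      _ ≤ ∑ i ∈ F, x i := by
        rw [← sum_neg_distrib]; exact sum_le_sum fun i _ => neg_le.1 (neg_le_negPart (x i))
  simpa using card_filter_mul_add_le_of_sum_eq_zero _ _ (sum_powersetCard_sum_eq_zero hk hsum)
    (fun F _ => hlow F) t

theorem card_tail_mul_le (hk : 1 ≤ k) (hpos : ∑ i, (x i)⁺ = α) (hneg : ∑ i, (x i)⁻ = α)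
    {t : ℝ} (ht : 0 ≤ t) :
    (#{F ∈ powersetCard k univ | t ≤ ∑ i ∈ F, x i} : ℝ) * (α * t)
      ≤ (Fintype.card ι - 2).choose (k - 1) * (α * α) := by
  have hevent : ∀ F : Finset ι, t ≤ ∑ i ∈ F, x i →
      α * t ≤ (∑ i ∈ F, (x i)⁺) * ∑ j ∈ Fᶜ, (x j)⁻ := by
    intro F hF
    refine (mul_le_mul_sub_of_le_sub (u := ∑ i ∈ F, (x i)⁺) (v := ∑ i ∈ F, (x i)⁻) ht
      (sum_nonneg fun i _ => negPart_nonneg (x i)) ?_ ?_).trans_eq ?_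
    · simpa only [← sum_sub_distrib, posPart_sub_negPart] using hF
    · exact hpos ▸ sum_le_univ_sum_of_nonneg fun i => posPart_nonneg (x i)
    · rw [← hneg, ← sum_compl_add_sum F, add_sub_cancel_right]
  calc _ ≤ ∑ F ∈ powersetCard k univ, (∑ i ∈ F, (x i)⁺) * ∑ j ∈ Fᶜ, (x j)⁻ :=
        card_filter_mul_le_sum _ _ (fun F _ => mul_nonneg (sum_nonneg fun i _ => posPart_nonneg _)
          (sum_nonneg fun j _ => negPart_nonneg _)) fun F _ => hevent F
    _ ≤ _ := by
        simpa only [hpos, hneg] using sum_powersetCard_mul_sum_compl_le hk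
          (fun i => posPart_nonneg (x i)) (fun j => negPart_nonneg (x j))

end Sampling

/-- Upper bound on `P(X_P ≥ t)` for a zero-sum population with absolute deviation `2α`. -/
theorem prob_tail_upper_bound
    {n : ℕ} (hn : 2 ≤ n) (k : ℕ) (hk : k ∈ Finset.Icc 1 (n - 1))
    (α : ℝ) (hα : 0 < α)
    (x : Fin n → ℝ) (hsum : ∑ i, x i = 0) (habs : ∑ i, |x i| = 2 * α)
    (t : ℝ) (ht : t ∈ Set.Ioo 0 α) :
    (((univ : Finset (Fin n)).powersetCard k |>.filter
          (fun F => t ≤ ∑ i ∈ F, x i)).card : ℝ) / (n.choose k : ℝ)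
      ≤ 1 - min 1 (t / (α - t))
            * (1 - 2 * k * ((n : ℝ) - k) / ((n : ℝ) * ((n : ℝ) - 1))) := by
  obtain ⟨hk1, hkn⟩ := mem_Icc.1 hk
  obtain ⟨ht0, htα⟩ := ht
  obtain ⟨hpos, hneg⟩ := sum_posPart_eq_and_sum_negPart_eq univ hsum habs
  have hC : (0 : ℝ) < n.choose k := by exact_mod_cast Nat.choose_pos (by omega)
  rw [mul_assoc 2, mul_div_assoc, ← choose_sub_two_div_choose hn hk1 (by omega)]
  apply le_one_sub_min_div_mul ht0 htα (by positivity)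
  · rw [div_mul_eq_mul_div, div_le_iff₀ hC]
    simpa using card_tail_mul_add_le hk1 hsum hneg t
  · have hsecond := card_tail_mul_le hk1 hpos hneg ht0.le
    rw [Fintype.card_fin] at hsecond
    have hNt : (#{F ∈ powersetCard k univ | t ≤ ∑ i ∈ F, x i} : ℝ) * t
        ≤ (n - 2).choose (k - 1) * α :=
      le_of_mul_le_mul_left (by linarith) hα
    rw [mul_assoc, mul_assoc, div_mul_eq_mul_div, div_mul_eq_mul_div]
    gcongr
end

section
/- Let P₁, P₂ ∈ ℝⁿ with P₁ ≺ P₂ (P₁ majorized by P₂), let k ∈ [n-1], and let X_{P_j} denote the sum of a uniformly random k-element subset of the coordinates of P_j. Then for every continuous convex function f : ℝ → ℝ, E(f(X_{P₁})) ≤ E(f(X_{P₂})). -/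
/-!
Majorization `x ≺ y` places `x` in the convex hull of the permutations of `y`. Otherwise a
functional `c` would separate `x` strictly from every `y ∘ σ`; but taking `σ` to arrange `y` in
the order of `c`, summation by parts against the prefix-sum inequalities of majorization gives
`∑ cᵢ xᵢ ≤ ∑ cᵢ y_{σ i}`. The map `z ↦ ∑_{#F = k} f (∑_{i ∈ F} zᵢ)` is convex and invariant under
permutations, so by the maximum principle its value at `x` is at most its value at `y`.
-/

open Finset

theorem Finset.sum_le_sum_of_card_eq_of_threshold {ι M : Type*} [DecidableEq ι]
    [AddCommGroup M] [PartialOrder M] [IsOrderedAddMonoid M] {f : ι → M} {s t : Finset ι}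
    (hcard : #t = #s) (a : M) (hs : ∀ i ∈ s, a ≤ f i) (hsc : ∀ i ∉ s, f i ≤ a) :
    ∑ i ∈ t, f i ≤ ∑ i ∈ s, f i := by
  have hcentered : ∑ i ∈ t, (f i - a) ≤ ∑ i ∈ s, (f i - a) := calc
    ∑ i ∈ t, (f i - a) = ∑ i ∈ t ∩ s, (f i - a) + ∑ i ∈ t \ s, (f i - a) :=
      (sum_inter_add_sum_sdiff t s _).symm
    _ ≤ ∑ i ∈ t ∩ s, (f i - a) + 0 := by
      gcongr
      exact sum_nonpos fun i hi => sub_nonpos.2 (hsc i (mem_sdiff.1 hi).2)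
    _ ≤ ∑ i ∈ s, (f i - a) := by
      rw [add_zero]
      exact sum_le_sum_of_subset_of_nonneg inter_subset_right
        fun i hi _ => sub_nonneg.2 (hs i hi)
  simpa only [sum_sub_distrib, sum_const, hcard, sub_le_sub_iff_right] using hcentered

theorem Fin.mul_sum_le_sum_mul_of_antitone {R : Type*} [CommRing R] [LinearOrder R]
    [IsStrictOrderedRing R] {n : ℕ} {c w : Fin (n + 1) → R} (hc : Antitone c)
    (hw : ∀ i, 0 ≤ ∑ j ∈ Iic i, w j) :
    c (last n) * ∑ i, w i ≤ ∑ i, c i * w i := by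
  induction n with
  | zero => simp
  | succ n ih =>
    have hprefix (i : Fin (n + 1)) :
        ∑ j ∈ Iic i, w (castSucc j) = ∑ j ∈ Iic (castSucc i), w j := by
      rw [← map_castSuccEmb_Iic, sum_map]
      rfl
    have hinit : c (castSucc (last n)) * ∑ i, w (castSucc i) ≤
        ∑ i, c (castSucc i) * w (castSucc i) :=
      ih (hc.comp_monotone strictMono_castSucc.monotone) fun i => (hprefix i).symm ▸ hw _
    have hinit_nonneg : 0 ≤ ∑ i : Fin (n + 1), w (castSucc i) := by
      simpa [← hprefix, ← top_eq_last] using hw (castSucc (last n))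
    have hc_last : c (last (n + 1)) ≤ c (castSucc (last n)) := hc (le_last _)
    rw [sum_univ_castSucc, sum_univ_castSucc fun i => c i * w i, mul_add]
    linarith [mul_le_mul_of_nonneg_right hc_last hinit_nonneg]

namespace IsMajorizedBy

variable {n : ℕ} {x y : Fin n → ℝ}

theorem comp_perm (hxy : IsMajorizedBy x y) (τ ρ : Equiv.Perm (Fin n)) :
    IsMajorizedBy (x ∘ τ) (y ∘ ρ) := by
  refine ⟨fun A => ?_, by simpa only [Function.comp_def, Equiv.sum_comp] using hxy.2⟩
  obtain ⟨B, hB, hAB⟩ := hxy.1 (A.map τ.toEmbedding)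
  refine ⟨B.map ρ.symm.toEmbedding, by simpa using hB, ?_⟩
  simpa [sum_map] using hAB

theorem sum_mul_le_sum_mul_of_antitone (hxy : IsMajorizedBy x y) {c : Fin n → ℝ}
    (hc : Antitone c) (hy : Antitone y) :
    ∑ i, c i * x i ≤ ∑ i, c i * y i := by
  cases n with
  | zero => simp
  | succ n =>
    have hprefix (i : Fin (n + 1)) : 0 ≤ ∑ j ∈ Iic i, (y j - x j) := by
      obtain ⟨B, hB, hAB⟩ := hxy.1 (Iic i)
      have hBy : ∑ j ∈ B, y j ≤ ∑ j ∈ Iic i, y j :=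
        sum_le_sum_of_card_eq_of_threshold hB (y i) (fun j hj => hy (mem_Iic.1 hj))
          fun j hj => hy (not_le.1 (mem_Iic.not.1 hj)).le
      rw [sum_sub_distrib]
      linarith
    have := Fin.mul_sum_le_sum_mul_of_antitone hc hprefix
    simpa only [sum_sub_distrib, hxy.2, sub_self, mul_zero, mul_sub, sub_nonneg] using this

theorem exists_perm_sum_mul_le (hxy : IsMajorizedBy x y) (c : Fin n → ℝ) :
    ∃ σ : Equiv.Perm (Fin n), ∑ i, c i * x i ≤ ∑ i, c i * y (σ i) := by
  set τ := Tuple.sort (OrderDual.toDual ∘ c)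
  set ρ := Tuple.sort (OrderDual.toDual ∘ y)
  have hcτ : Antitone (c ∘ τ) :=
    monotone_toDual_comp_iff.1 (Tuple.monotone_sort (OrderDual.toDual ∘ c))
  have hyρ : Antitone (y ∘ ρ) :=
    monotone_toDual_comp_iff.1 (Tuple.monotone_sort (OrderDual.toDual ∘ y))
  have key := (hxy.comp_perm τ ρ).sum_mul_le_sum_mul_of_antitone hcτ hyρ
  refine ⟨τ.symm.trans ρ, ?_⟩
  rw [← Equiv.sum_comp τ, ← Equiv.sum_comp τ fun i => c i * y _]
  simpa using key

theorem mem_convexHull_perm (hxy : IsMajorizedBy x y) :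
    x ∈ convexHull ℝ (Set.range fun σ : Equiv.Perm (Fin n) => y ∘ σ) := by
  by_contra hx
  obtain ⟨l, u, hl, hlx⟩ := geometric_hahn_banach_closed_point (convex_convexHull ℝ _)
    ((Set.finite_range _).isClosed_convexHull (𝕜 := ℝ)) hx
  set c : Fin n → ℝ := fun i => l fun j => if i = j then 1 else 0
  have hl_apply (z : Fin n → ℝ) : l z = ∑ i, c i * z i := by
    rw [← ContinuousLinearMap.coe_coe, LinearMap.pi_apply_eq_sum_univ]
    simp [c, mul_comm]
  obtain ⟨σ, hσ⟩ := hxy.exists_perm_sum_mul_le c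
  have hlσ := hl (y ∘ σ) (subset_convexHull ℝ _ ⟨σ, rfl⟩)
  rw [hl_apply] at hlσ hlx
  exact absurd hσ (not_le.2 (hlσ.trans hlx))

theorem le_of_convexOn_of_comp_perm {Φ : (Fin n → ℝ) → ℝ} (hxy : IsMajorizedBy x y)
    (hΦ : ConvexOn ℝ Set.univ Φ) (hperm : ∀ σ : Equiv.Perm (Fin n), Φ (y ∘ σ) = Φ y) :
    Φ x ≤ Φ y := by
  obtain ⟨_, ⟨σ, rfl⟩, hle⟩ :=
    hΦ.exists_ge_of_mem_convexHull (Set.subset_univ _) hxy.mem_convexHull_perm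
  exact hle.trans (hperm σ).le

end IsMajorizedBy

theorem ConvexOn.sum_comp_subsetSum {ι : Type*} {f : ℝ → ℝ} (hf : ConvexOn ℝ Set.univ f)
    (𝓕 : Finset (Finset ι)) :
    ConvexOn ℝ Set.univ fun z : ι → ℝ => ∑ F ∈ 𝓕, f (∑ i ∈ F, z i) := by
  have hF (F : Finset ι) : ConvexOn ℝ Set.univ fun z : ι → ℝ => f (∑ i ∈ F, z i) := by
    convert hf.comp_linearMap (∑ i ∈ F, LinearMap.proj i) using 1 <;> ext <;> simp
  simpa only [Finset.sum_fn] using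
    sum_induction _ (ConvexOn ℝ Set.univ) (fun _ _ => ConvexOn.add) (convexOn_const 0 convex_univ)
      fun F _ => hF F

theorem Finset.sum_powersetCard_univ_comp_perm {ι M β : Type*} [Fintype ι] [AddCommMonoid M]
    [AddCommMonoid β] (f : M → β) (k : ℕ) (g : ι → M) (σ : Equiv.Perm ι) :
    ∑ F ∈ univ.powersetCard k, f (∑ i ∈ F, g (σ i)) =
      ∑ F ∈ univ.powersetCard k, f (∑ i ∈ F, g i) := by
  conv_rhs => rw [← map_univ_equiv σ, powersetCard_map, sum_map]
  simp [sum_map]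

theorem karlin_convex_order_general
    {n k : ℕ}
    (P₁ P₂ : Fin n → ℝ) (hmaj : IsMajorizedBy P₁ P₂)
    (f : ℝ → ℝ) (hconv : ConvexOn ℝ Set.univ f) :
    (∑ F ∈ (univ : Finset (Fin n)).powersetCard k, f (∑ i ∈ F, P₁ i)) / (n.choose k : ℝ)
      ≤ (∑ F ∈ (univ : Finset (Fin n)).powersetCard k, f (∑ i ∈ F, P₂ i)) / (n.choose k : ℝ) := by
  have hsum := hmaj.le_of_convexOn_of_comp_perm (hconv.sum_comp_subsetSum (univ.powersetCard k))
    fun σ => sum_powersetCard_univ_comp_perm f k P₂ σ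
  exact div_le_div_of_nonneg_right hsum (Nat.cast_nonneg _)

/-- Karlin: if `P₁ ≺ P₂`, then for every continuous convex `f`,
`E f(X_{P₁}) ≤ E f(X_{P₂})`, where `X_P` is the sum of a uniformly random `k`-subset. -/
theorem karlin_convex_order
    {n k : ℕ} (hk : 1 ≤ k) (hkn : k < n)
    (P₁ P₂ : Fin n → ℝ) (hmaj : IsMajorizedBy P₁ P₂)
    (f : ℝ → ℝ) (hconv : ConvexOn ℝ Set.univ f) (hcont : Continuous f) :
    (∑ F ∈ (univ : Finset (Fin n)).powersetCard k, f (∑ i ∈ F, P₁ i)) / (n.choose k : ℝ)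
      ≤ (∑ F ∈ (univ : Finset (Fin n)).powersetCard k, f (∑ i ∈ F, P₂ i)) / (n.choose k : ℝ) :=
  karlin_convex_order_general P₁ P₂ hmaj f hconv
end

section
/- Let P = (x₁,...,xₙ) with Σxᵢ = 0 and Σ|xᵢ| = 2α for α > 0, k ∈ [n-1], and X_P the sum of a uniformly random k-subset. Then for every t ∈ (0, 4k(n-k)α/(n²(n-1))): P(X_P ≥ t) ≥ (2α/(α-t))·(k(n-k)/(n²(n-1))) - t/(2(α-t)). -/
/-!
Write `s F = ∑ i ∈ F, x i`. Exchanging `i ∈ F` for `j ∉ F` turns `F` into `F'` with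
`s F - s F' = x i - x j`, so `|x i - x j| ≤ |s F - t| + |s F' - t|`. Summed over all exchanges,
which cover every ordered pair `i ≠ j` equally often, this gives `E |X_P - t| ≥ α / (n - 1)`,
because `∑ i, ∑ j, |x i - x j| ≥ n ∑ i, |x i| = 2 α n`. Since `X_P ≤ α` and `E X_P = 0`,
`E |X_P - t| - t = 2 E (X_P - t)⁺ ≤ 2 (α - t) P(X_P ≥ t)`, and `4 k (n - k) ≤ n²` turns the
resulting bound into the stated one.
-/

open Finset

section Exchange

variable {ι : Type*} [Fintype ι] [DecidableEq ι]

theorem card_filter_powersetCard_subset_disjoint {a b : Finset ι} (hab : Disjoint a b) {k : ℕ}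
    (hk : #a ≤ k) :
    #{F ∈ powersetCard k univ | a ⊆ F ∧ Disjoint b F}
      = (Fintype.card ι - #a - #b).choose (k - #a) := by
  have hcard : #(univ \ (a ∪ b)) = Fintype.card ι - #a - #b := by
    rw [card_sdiff_of_subset (subset_univ _), card_union_of_disjoint hab, card_univ, Nat.sub_sub]
  rw [← hcard, ← card_powersetCard]
  refine card_nbij' (· \ a) (· ∪ a) ?_ ?_ ?_ ?_
  · intro F hF
    simp only [coe_filter, mem_powersetCard_univ, Set.mem_ofPred_eq] at hF
    obtain ⟨hFk, haF, hbF⟩ := hF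
    refine mem_powersetCard.2 ⟨fun y hy => ?_, by rw [card_sdiff_of_subset haF, hFk]⟩
    simp only [mem_sdiff, mem_union, mem_univ, true_and] at hy ⊢
    exact fun h => h.elim hy.2 (fun hb => disjoint_left.1 hbF hb hy.1)
  · intro G hG
    obtain ⟨hGab, hGk⟩ := mem_powersetCard.1 hG
    obtain ⟨hGa, hGb⟩ := disjoint_union_right.1 (subset_sdiff.1 hGab).2
    simp only [coe_filter, mem_powersetCard_univ, Set.mem_ofPred_eq]
    refine ⟨?_, subset_union_right, disjoint_union_right.2 ⟨hGb.symm, hab.symm⟩⟩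
    rw [card_union_of_disjoint hGa, hGk]
    omega
  · intro F hF
    simp only [coe_filter, mem_powersetCard_univ, Set.mem_ofPred_eq] at hF
    exact sdiff_union_of_subset hF.2.1
  · intro G hG
    obtain ⟨hGab, -⟩ := mem_powersetCard.1 hG
    exact union_sdiff_cancel_right (disjoint_union_right.1 (subset_sdiff.1 hGab).2).1

theorem sum_powersetCard_sum {M : Type*} [AddCommMonoid M] {k : ℕ} (hk : 1 ≤ k) (x : ι → M) :
    ∑ F ∈ powersetCard k univ, ∑ i ∈ F, x i
      = (Fintype.card ι - 1).choose (k - 1) • ∑ i, x i := by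
  have hcount (i : ι) :
      #{F ∈ powersetCard k univ | i ∈ F} = (Fintype.card ι - 1).choose (k - 1) := by
    simpa using card_filter_powersetCard_subset_disjoint (disjoint_empty_right {i})
      (by simpa using hk)
  calc ∑ F ∈ powersetCard k univ, ∑ i ∈ F, x i
      = ∑ i, ∑ F ∈ powersetCard k univ, if i ∈ F then x i else 0 := by
        rw [sum_comm]; simp only [sum_ite_mem, univ_inter]
    _ = _ := by simp only [← sum_filter, sum_const, hcount, smul_sum]

variable (k : ℕ)

def exchanges : Finset (Finset ι × ι × ι) :=
  {p ∈ powersetCard k univ ×ˢ univ | p.2.1 ∈ p.1 ∧ p.2.2 ∉ p.1}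

def exchange (p : Finset ι × ι × ι) : Finset ι × ι × ι :=
  (insert p.2.2 (p.1.erase p.2.1), p.2.2, p.2.1)

variable {k}

@[simp]
theorem mem_exchanges {p : Finset ι × ι × ι} :
    p ∈ exchanges k ↔ #p.1 = k ∧ p.2.1 ∈ p.1 ∧ p.2.2 ∉ p.1 := by
  simp [exchanges]

theorem exchange_mem_exchanges {p : Finset ι × ι × ι} (hp : p ∈ exchanges k) :
    exchange p ∈ exchanges k := by
  obtain ⟨F, i, j⟩ := p
  rw [mem_exchanges] at hp
  obtain ⟨hF, hi, hj⟩ := hp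
  have hjF : j ∉ F.erase i := fun h => hj (mem_of_mem_erase h)
  simp only [exchange, mem_exchanges, mem_insert_self, mem_insert, mem_erase, true_and]
  refine ⟨?_, ?_⟩
  · rw [card_insert_of_notMem hjF, card_erase_of_mem hi, hF]
    have := card_pos.2 ⟨i, hi⟩
    omega
  · rintro (rfl | h)
    exacts [hj hi, h.1 rfl]

theorem exchange_exchange {p : Finset ι × ι × ι} (hp : p ∈ exchanges k) :
    exchange (exchange p) = p := by
  obtain ⟨F, i, j⟩ := p
  rw [mem_exchanges] at hp
  simp only [exchange, erase_insert (fun h => hp.2.2 (mem_of_mem_erase h)), insert_erase hp.2.1]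

theorem sum_exchanges_comp_exchange {M : Type*} [AddCommMonoid M] (g : Finset ι × ι × ι → M) :
    ∑ p ∈ exchanges k, g (exchange p) = ∑ p ∈ exchanges k, g p :=
  sum_nbij' exchange exchange (fun _ => exchange_mem_exchanges) (fun _ => exchange_mem_exchanges)
    (fun _ => exchange_exchange) (fun _ => exchange_exchange) fun _ _ => rfl

theorem sum_exchange_fst_sum {M : Type*} [AddCommGroup M] (x : ι → M) {p : Finset ι × ι × ι}
    (hp : p ∈ exchanges k) :
    ∑ a ∈ (exchange p).1, x a = ∑ a ∈ p.1, x a - x p.2.1 + x p.2.2 := by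
  obtain ⟨F, i, j⟩ := p
  rw [mem_exchanges] at hp
  rw [exchange, sum_insert fun h => hp.2.2 (mem_of_mem_erase h), sum_erase_eq_sub hp.2.1]
  abel

theorem sum_exchanges_fst {M : Type*} [AddCommMonoid M] (f : Finset ι → M) :
    ∑ p ∈ exchanges k, f p.1 = (k * (Fintype.card ι - k)) • ∑ F ∈ powersetCard k univ, f F := by
  rw [exchanges, sum_filter, sum_product, smul_sum]
  refine sum_congr rfl fun F hF => ?_
  have hcompl : {q ∈ (univ : Finset (ι × ι)) | q.1 ∈ F ∧ q.2 ∉ F} = F ×ˢ Fᶜ := by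
    ext; simp
  rw [← sum_filter, hcompl]
  dsimp only
  rw [sum_const, card_product, card_compl, (mem_powersetCard.1 hF).2]

theorem sum_exchanges_snd {M : Type*} [AddCommMonoid M] (hk : 1 ≤ k) (g : ι → ι → M) :
    ∑ p ∈ exchanges k, g p.2.1 p.2.2
      = (Fintype.card ι - 2).choose (k - 1) • ∑ q ∈ univ.offDiag, g q.1 q.2 := by
  have hcount {i j : ι} (hij : i ≠ j) :
      #{F ∈ powersetCard k univ | i ∈ F ∧ j ∉ F} = (Fintype.card ι - 2).choose (k - 1) := by
    simpa [Nat.sub_sub] using card_filter_powersetCard_subset_disjoint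
      (disjoint_singleton.2 hij) (a := {i}) (b := {j}) (by simpa using hk)
  rw [exchanges, sum_filter, sum_product_right, smul_sum]
  simp only [← sum_filter, sum_const]
  rw [← sum_subset (subset_univ univ.offDiag)]
  · exact sum_congr rfl fun q hq => by rw [hcount (mem_offDiag.1 hq).2.2]
  · intro q _ hq
    have hq : q.1 = q.2 := by simpa using hq
    simp [hq]

end Exchange

section SubsetSums

variable {ι : Type*} [Fintype ι] {x : ι → ℝ}

theorem sum_le_half_sum_abs_of_sum_eq_zero (hsum : ∑ i, x i = 0) (s : Finset ι) :
    ∑ i ∈ s, x i ≤ (∑ i, |x i|) / 2 :=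
  calc ∑ i ∈ s, x i
      ≤ ∑ i ∈ s, (x i + |x i|) / 2 := sum_le_sum fun i _ => by linarith [le_abs_self (x i)]
    _ ≤ ∑ i, (x i + |x i|) / 2 :=
        sum_le_sum_of_subset_of_nonneg (subset_univ s) fun i _ _ => by
          linarith [neg_abs_le (x i)]
    _ = (∑ i, |x i|) / 2 := by rw [← sum_div, sum_add_distrib, hsum, zero_add]

variable [DecidableEq ι]

theorem card_mul_sum_abs_le_sum_offDiag_abs_sub (hsum : ∑ i, x i = 0) :
    Fintype.card ι * ∑ i, |x i| ≤ ∑ q ∈ univ.offDiag, |x q.1 - x q.2| := by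
  have hrow (i : ι) : Fintype.card ι * |x i| ≤ ∑ j, |x i - x j| := by
    calc Fintype.card ι * |x i| = |∑ j, (x i - x j)| := by
          rw [sum_sub_distrib, hsum, sub_zero, sum_const, card_univ, nsmul_eq_mul, abs_mul,
            Nat.abs_cast]
      _ ≤ ∑ j, |x i - x j| := abs_sum_le_sum_abs _ _
  have hdiag : ∑ q ∈ univ.offDiag, |x q.1 - x q.2| = ∑ i, ∑ j, |x i - x j| := by
    rw [sum_subset (subset_univ _) fun q _ hq => ?_, ← univ_product_univ, sum_product]
    have hq : q.1 = q.2 := by simpa using hq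
    simp [hq]
  rw [hdiag, mul_sum]
  exact sum_le_sum fun i _ => hrow i

theorem sum_abs_mul_choose_le (hsum : ∑ i, x i = 0) {k : ℕ} (hk : 1 ≤ k)
    (hkn : k < Fintype.card ι) (t : ℝ) :
    (∑ i, |x i|) * (Fintype.card ι).choose k
      ≤ 2 * (Fintype.card ι - 1) * ∑ F ∈ powersetCard k univ, |∑ i ∈ F, x i - t| := by
  set n := Fintype.card ι with hn
  set C : ℝ := ↑((n - 2).choose (k - 1))
  set G := ∑ F ∈ powersetCard k univ, |∑ i ∈ F, x i - t| with hG
  have hcount : (k * (n - k) : ℝ) * n.choose k = C * (n * (n - 1)) := by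
    -- count `exchanges k` by the set `F` and by the pair `(i, j)`
    have h := (sum_exchanges_fst (ι := ι) (k := k) fun _ => (1 : ℝ)).symm.trans
      (sum_exchanges_snd hk fun _ _ => (1 : ℝ))
    simp only [sum_const, card_powersetCard, card_univ, offDiag_card, nsmul_eq_mul, mul_one,
      ← hn] at h
    push_cast [Nat.cast_sub hkn.le, Nat.cast_sub (Nat.le_mul_self n)] at h
    linear_combination h
  have hexchange : ∑ p ∈ exchanges k, |x p.2.1 - x p.2.2| ≤ 2 * (k * (n - k)) * G :=
    calc ∑ p ∈ exchanges k, |x p.2.1 - x p.2.2|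
        ≤ ∑ p ∈ exchanges k, (|∑ i ∈ p.1, x i - t| + |∑ i ∈ (exchange p).1, x i - t|) :=
          sum_le_sum fun p hp => by
            rw [sum_exchange_fst_sum x hp]
            exact (abs_sub _ _).trans_eq' (by ring_nf)
      _ = 2 * (k * (n - k)) * G := by
          rw [sum_add_distrib, sum_exchanges_comp_exchange (fun p => |∑ i ∈ p.1, x i - t|),
            sum_exchanges_fst (fun F => |∑ i ∈ F, x i - t|), nsmul_eq_mul, ← hn, ← hG]
          push_cast [Nat.cast_sub hkn.le]
          ring
  have hpairs : C * (n * ∑ i, |x i|) ≤ 2 * (k * (n - k)) * G := by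
    refine (mul_le_mul_of_nonneg_left (card_mul_sum_abs_le_sum_offDiag_abs_sub hsum)
      (Nat.cast_nonneg _)).trans ?_
    rwa [← nsmul_eq_mul, ← sum_exchanges_snd hk fun i j => |x i - x j|]
  have hkk : (0 : ℝ) < k * (n - k) := by
    have : (k : ℝ) < n := by exact_mod_cast hkn
    have : (1 : ℝ) ≤ k := by exact_mod_cast hk
    nlinarith
  have hn1 : (1 : ℝ) ≤ n := by exact_mod_cast hk.trans hkn.le
  refine le_of_mul_le_mul_left ?_ hkk
  linear_combination mul_le_mul_of_nonneg_left hpairs (sub_nonneg.2 hn1)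
    + (∑ i, |x i|) * hcount

theorem sum_abs_sub_add_sum_sub_le {β : Type*} (s : Finset β) (f : β → ℝ) {a : ℝ}
    (hf : ∀ b ∈ s, f b ≤ a) (t : ℝ) :
    ∑ b ∈ s, |f b - t| + ∑ b ∈ s, (f b - t) ≤ 2 * (a - t) * #{b ∈ s | t ≤ f b} := by
  rw [← sum_add_distrib, natCast_card_filter, mul_sum]
  refine sum_le_sum fun b hb => ?_
  split_ifs with h
  · rw [abs_of_nonneg (sub_nonneg.2 h)]
    linarith [hf b hb]
  · rw [abs_of_neg (by linarith)]
    simp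

theorem div_le_card_filter_le_sum_div_choose (hsum : ∑ i, x i = 0) {α : ℝ}
    (habs : ∑ i, |x i| = 2 * α) {k : ℕ} (hk : 1 ≤ k) (hkn : k < Fintype.card ι) {t : ℝ}
    (htα : t < α) :
    (α / (Fintype.card ι - 1) - t) / (2 * (α - t))
      ≤ #{F ∈ powersetCard k univ | t ≤ ∑ i ∈ F, x i} / (Fintype.card ι).choose k := by
  have hN : (0 : ℝ) < (Fintype.card ι).choose k := by exact_mod_cast Nat.choose_pos hkn.le
  have hn : (1 : ℝ) < Fintype.card ι := by exact_mod_cast hk.trans_lt hkn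
  have hspread : α / (Fintype.card ι - 1) * (Fintype.card ι).choose k
      ≤ ∑ F ∈ powersetCard k univ, |∑ i ∈ F, x i - t| := by
    rw [div_mul_eq_mul_div, div_le_iff₀ (by linarith)]
    linarith [habs ▸ sum_abs_mul_choose_le hsum hk hkn t]
  have hmean : ∑ F ∈ powersetCard k univ, (∑ i ∈ F, x i - t)
      = -t * (Fintype.card ι).choose k := by
    rw [sum_sub_distrib, sum_powersetCard_sum hk, hsum, smul_zero, sum_const, card_powersetCard,
      card_univ, nsmul_eq_mul]
    ring
  have htail := sum_abs_sub_add_sum_sub_le (powersetCard k univ) (fun F => ∑ i ∈ F, x i)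
    (fun F _ => (sum_le_half_sum_abs_of_sum_eq_zero hsum F).trans_eq (by rw [habs])) t
  rw [div_le_div_iff₀ (by linarith) hN]
  linarith

end SubsetSums

theorem prob_tail_lower_bound_general
    {n : ℕ} (k : ℕ) (hk : k ∈ Finset.Icc 1 (n - 1))
    (α : ℝ)
    (x : Fin n → ℝ) (hsum : ∑ i, x i = 0) (habs : ∑ i, |x i| = 2 * α)
    (t : ℝ) (ht : t ∈ Set.Ioo 0 (4 * k * ((n : ℝ) - k) * α / ((n : ℝ) ^ 2 * ((n : ℝ) - 1)))) :
    2 * α / (α - t) * ((k : ℝ) * ((n : ℝ) - k) / ((n : ℝ) ^ 2 * ((n : ℝ) - 1)))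
        - t / (2 * (α - t))
      ≤ (((univ : Finset (Fin n)).powersetCard k |>.filter
            (fun F => t ≤ ∑ i ∈ F, x i)).card : ℝ) / (n.choose k : ℝ) := by
  obtain ⟨hk1, hkn⟩ := mem_Icc.1 hk
  have hn : (2 : ℝ) ≤ n := by exact_mod_cast (show 2 ≤ n by omega)
  have hn1 : (0 : ℝ) < n - 1 := by linarith
  have hα : 0 ≤ α := by linarith [habs ▸ sum_nonneg fun i _ => abs_nonneg (x i)]
  have hkk : 4 * k * ((n : ℝ) - k) ≤ n ^ 2 := by linarith [four_mul_le_sq_add (k : ℝ) (n - k)]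
  have hmax : 4 * k * ((n : ℝ) - k) * α / ((n : ℝ) ^ 2 * ((n : ℝ) - 1)) ≤ α / (n - 1) := by
    rw [div_le_div_iff₀ (by positivity) hn1]
    nlinarith [mul_nonneg (mul_nonneg (sub_nonneg.2 hkk) hα) hn1.le]
  have htα : t < α := by
    have : α / (n - 1) ≤ α := div_le_self hα (by linarith)
    linarith [ht.2]
  calc 2 * α / (α - t) * ((k : ℝ) * ((n : ℝ) - k) / ((n : ℝ) ^ 2 * ((n : ℝ) - 1)))
        - t / (2 * (α - t))
      = (4 * k * ((n : ℝ) - k) * α / ((n : ℝ) ^ 2 * ((n : ℝ) - 1)) - t) / (2 * (α - t)) := by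
        field_simp [hn1.ne', (sub_pos.2 htα).ne']
        ring
    _ ≤ (α / (n - 1) - t) / (2 * (α - t)) := by gcongr
    _ ≤ _ := by
        simpa using div_le_card_filter_le_sum_div_choose hsum habs hk1
          (by simpa using show k < n by omega) htα

/-- Lower bound on `P(X_P ≥ t)` for moderate `t > 0`. -/
theorem prob_tail_lower_bound
    {n : ℕ} (hn : 2 ≤ n) (k : ℕ) (hk : k ∈ Finset.Icc 1 (n - 1))
    (α : ℝ) (hα : 0 < α)
    (x : Fin n → ℝ) (hsum : ∑ i, x i = 0) (habs : ∑ i, |x i| = 2 * α)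
    (t : ℝ) (ht : t ∈ Set.Ioo 0 (4 * k * ((n : ℝ) - k) * α / ((n : ℝ) ^ 2 * ((n : ℝ) - 1)))) :
    2 * α / (α - t) * ((k : ℝ) * ((n : ℝ) - k) / ((n : ℝ) ^ 2 * ((n : ℝ) - 1)))
        - t / (2 * (α - t))
      ≤ (((univ : Finset (Fin n)).powersetCard k |>.filter
            (fun F => t ≤ ∑ i ∈ F, x i)).card : ℝ) / (n.choose k : ℝ) :=
  prob_tail_lower_bound_general k hk α x hsum habs t ht
end
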